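/- arXiv:2108.10309 — 6 statements merged into one kernel-verified Lean document; each statement's English description precedes it below -/
import Mathlib

section
/- For any set Γ of permutations and any n ≥ 1, Σ_{π ∈ S_n} s^{occ_{Γ^r}(π)} t^{ides(π)+1} = t^{n+1} · Σ_{π ∈ S_n} s^{occ_Γ(π)} t^{-(ides(π)+1)} (as an identity of Laurent polynomials), where Γ^r = {σ^r : σ ∈ Γ}. -/
/-!
Reversal `π ↦ π^r` is an involution of `S_n`. It carries an occurrence of `σ^r` at a factor
of `π` to an occurrence of `σ` at the mirrored factor of `π^r`, so
`occ_{Γ^r}(π) = occ_Γ(π^r)`. On inverses it acts as complementation `(π^r)⁻¹ = (π⁻¹)^c`,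
which turns the descents in `[n-1]` into the ascents, so `ides(π^r) = n - 1 - ides(π)`.
Reindexing the left-hand sum by `π ↦ π^r` then gives the identity termwise.
-/

open Finset

/-- The 1-based word of values of a permutation `π ∈ S_n`: `val π i` is the value
(in `{1, …, n}`) of `π` at the 1-based position `i`, and `0` if `i` is out of range. -/
def pval {n : ℕ} (π : Equiv.Perm (Fin n)) (i : ℕ) : ℕ :=
  if h : 1 ≤ i ∧ i - 1 < n then (π ⟨i - 1, h.2⟩ : ℕ) + 1 else 0

/-- The descent set of `π ∈ S_n`: the set of `i ∈ [n-1]` with `π_i > π_{i+1}`. -/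
def desSet {n : ℕ} (π : Equiv.Perm (Fin n)) : Finset ℕ :=
  (Finset.Icc 1 (n - 1)).filter (fun i => pval π (i + 1) < pval π i)

/-- The descent number. -/
def des {n : ℕ} (π : Equiv.Perm (Fin n)) : ℕ := (desSet π).card

/-- The major index: the sum of the descents. -/
def maj {n : ℕ} (π : Equiv.Perm (Fin n)) : ℕ := ∑ i ∈ desSet π, i

/-- The comajor index: `comaj π = ∑_{i ∈ Des π} (n - i)`. -/
def comaj {n : ℕ} (π : Equiv.Perm (Fin n)) : ℕ := ∑ i ∈ desSet π, (n - i)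

/-- The peak number: the number of `i` with `2 ≤ i ≤ n-1` and `π_{i-1} < π_i > π_{i+1}`. -/
def pk {n : ℕ} (π : Equiv.Perm (Fin n)) : ℕ :=
  ((Finset.Icc 2 (n - 1)).filter
    (fun i => pval π (i - 1) < pval π i ∧ pval π (i + 1) < pval π i)).card

/-- The left peak number: the number of `i ∈ [n-1]` which are peaks of `π`, or `i = 1`
when `1` is a descent (equivalently, peaks of `0π`; note `pval π 0 = 0`). -/
def lpk {n : ℕ} (π : Equiv.Perm (Fin n)) : ℕ :=
  ((Finset.Icc 1 (n - 1)).filter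
    (fun i => pval π (i - 1) < pval π i ∧ pval π (i + 1) < pval π i)).card

/-- Inverse descent number. -/
def ides {n : ℕ} (π : Equiv.Perm (Fin n)) : ℕ := des π⁻¹

/-- Inverse major index. -/
def imaj {n : ℕ} (π : Equiv.Perm (Fin n)) : ℕ := maj π⁻¹

/-- Inverse comajor index. -/
def icomaj {n : ℕ} (π : Equiv.Perm (Fin n)) : ℕ := comaj π⁻¹

/-- Inverse peak number. -/
def ipk {n : ℕ} (π : Equiv.Perm (Fin n)) : ℕ := pk π⁻¹

/-- Inverse left peak number. -/
def ilpk {n : ℕ} (π : Equiv.Perm (Fin n)) : ℕ := lpk π⁻¹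

/-- The reverse `π^r` of `π`, with `(π^r)_i = π_{n+1-i}`. -/
def prev {n : ℕ} (π : Equiv.Perm (Fin n)) : Equiv.Perm (Fin n) :=
  (Fin.revPerm : Equiv.Perm (Fin n)).trans π

/-- The complement `π^c` of `π`, with `(π^c)_i = n + 1 - π_i`. -/
def pcomp {n : ℕ} (π : Equiv.Perm (Fin n)) : Equiv.Perm (Fin n) :=
  π.trans (Fin.revPerm : Equiv.Perm (Fin n))

/-- The reverse-complement `π^{rc} = (π^r)^c` of `π`. -/
def prc {n : ℕ} (π : Equiv.Perm (Fin n)) : Equiv.Perm (Fin n) := pcomp (prev π)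


/-- `IsOcc σ π i` says that the factor of `π` of length `m` starting at the 0-based
position `i` is an occurrence of the consecutive pattern `σ ∈ S_m`, i.e. its
standardization is `σ` (equivalently, it is order-isomorphic to the word of `σ`). -/
def IsOcc {n m : ℕ} (σ : Equiv.Perm (Fin m)) (π : Equiv.Perm (Fin n)) (i : ℕ) : Prop :=
  ∃ h : i + m ≤ n, ∀ s t : Fin m,
    (σ s < σ t ↔ π ⟨i + s.val, by omega⟩ < π ⟨i + t.val, by omega⟩)

/-- `occ Γ π` is the number of occurrences in `π` of consecutive patterns from the
set `Γ` (given as a family of sets of patterns of each length `m`): the number of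
pairs `(m, i)` such that some `σ ∈ Γ m` occurs in `π` at position `i`. -/
noncomputable def occ (Γ : ∀ m : ℕ, Set (Equiv.Perm (Fin m))) {n : ℕ}
    (π : Equiv.Perm (Fin n)) : ℕ :=
  Set.ncard { p : ℕ × ℕ | ∃ σ ∈ Γ p.1, IsOcc σ π p.2 }

lemma prev_involutive {n : ℕ} : Function.Involutive (prev (n := n)) := fun π => by
  ext x
  simp [prev]

lemma prev_inv {n : ℕ} (π : Equiv.Perm (Fin n)) : (prev π)⁻¹ = pcomp π⁻¹ := rfl

lemma pval_le {n : ℕ} (π : Equiv.Perm (Fin n)) (i : ℕ) : pval π i ≤ n := by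
  unfold pval
  split_ifs
  · exact (π _).isLt
  · exact Nat.zero_le n

lemma pval_pcomp {n : ℕ} (π : Equiv.Perm (Fin n)) {i : ℕ} (h1 : 1 ≤ i) (h2 : i ≤ n) :
    pval (pcomp π) i = n + 1 - pval π i := by
  have hi : 1 ≤ i ∧ i - 1 < n := ⟨h1, by omega⟩
  simp only [pval, hi, and_self, dite_true, pcomp, Equiv.trans_apply, Fin.revPerm_apply,
    Fin.val_rev]
  omega

lemma pval_ne {n : ℕ} (π : Equiv.Perm (Fin n)) {i j : ℕ} (hi : 1 ≤ i ∧ i ≤ n)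
    (hj : 1 ≤ j ∧ j ≤ n) (hij : i ≠ j) : pval π i ≠ pval π j := by
  have hi' : 1 ≤ i ∧ i - 1 < n := ⟨hi.1, by omega⟩
  have hj' : 1 ≤ j ∧ j - 1 < n := ⟨hj.1, by omega⟩
  simp only [pval, hi', hj', and_self, dite_true, ne_eq, Nat.add_right_cancel_iff,
    Fin.val_inj, π.injective.eq_iff, Fin.mk.injEq]
  omega

lemma desSet_pcomp {n : ℕ} (π : Equiv.Perm (Fin n)) :
    desSet (pcomp π) = Icc 1 (n - 1) \ desSet π := by
  ext i
  simp only [desSet, mem_filter, mem_sdiff, mem_Icc]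
  refine and_congr_right fun hi => ?_
  have hne := pval_ne π (i := i + 1) (j := i) ⟨by omega, by omega⟩ ⟨hi.1, by omega⟩ (by omega)
  rw [pval_pcomp π (by omega) (by omega), pval_pcomp π hi.1 (by omega)]
  have := pval_le π i
  have := pval_le π (i + 1)
  simp only [hi, true_and]
  omega

lemma desSet_subset {n : ℕ} (π : Equiv.Perm (Fin n)) : desSet π ⊆ Icc 1 (n - 1) :=
  filter_subset _ _

lemma ides_le {n : ℕ} (π : Equiv.Perm (Fin n)) : ides π ≤ n - 1 :=
  (card_le_card (desSet_subset π⁻¹)).trans (Nat.card_Icc 1 (n - 1)).le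

lemma des_pcomp {n : ℕ} (π : Equiv.Perm (Fin n)) : des (pcomp π) = n - 1 - des π := by
  rw [des, desSet_pcomp, card_sdiff_of_subset (desSet_subset π), Nat.card_Icc,
    Nat.add_sub_cancel, des]

lemma ides_prev {n : ℕ} (π : Equiv.Perm (Fin n)) : ides (prev π) = n - 1 - ides π := by
  rw [ides, prev_inv, des_pcomp, ides]

lemma IsOcc.prev {n m : ℕ} {σ : Equiv.Perm (Fin m)} {π : Equiv.Perm (Fin n)} {i : ℕ}
    (h : IsOcc σ π i) : IsOcc (prev σ) (prev π) (n - m - i) := by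
  obtain ⟨hle, h⟩ := h
  refine ⟨by omega, fun a b => ?_⟩
  have mirror : ∀ c : Fin m, (⟨n - m - i + c, by omega⟩ : Fin n).rev = ⟨i + c.rev, by omega⟩ :=
    fun c => Fin.ext (by simp only [Fin.val_rev]; omega)
  simpa only [_root_.prev, Equiv.trans_apply, Fin.revPerm_apply, mirror] using h a.rev b.rev

lemma occ_image_prev (Γ : ∀ m : ℕ, Set (Equiv.Perm (Fin m))) {n : ℕ}
    (π : Equiv.Perm (Fin n)) : occ (fun m => prev '' Γ m) π = occ Γ (prev π) := by
  let mirror : ℕ × ℕ → ℕ × ℕ := fun p => (p.1, n - p.1 - p.2)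
  have himage : { p : ℕ × ℕ | ∃ σ ∈ prev '' Γ p.1, IsOcc σ π p.2 } =
      mirror '' { p : ℕ × ℕ | ∃ σ ∈ Γ p.1, IsOcc σ (prev π) p.2 } := by
    ext ⟨m, i⟩
    simp only [Set.mem_ofPred_eq, Set.mem_image, Prod.mk.injEq, Prod.exists, mirror]
    constructor
    · rintro ⟨_, ⟨τ, hτ, rfl⟩, hocc⟩
      have hτ' : IsOcc τ (prev π) (n - m - i) := prev_involutive τ ▸ hocc.prev
      exact ⟨m, n - m - i, ⟨τ, hτ, hτ'⟩, rfl, by have := hocc.1; omega⟩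
    · rintro ⟨m, j, ⟨τ, hτ, hocc⟩, rfl, rfl⟩
      exact ⟨_root_.prev τ, ⟨τ, hτ, rfl⟩, prev_involutive π ▸ hocc.prev⟩
  rw [occ, occ, himage]
  refine Set.InjOn.ncard_image ?_
  rintro ⟨m, i⟩ ⟨_, _, hi⟩ ⟨m', i'⟩ ⟨_, _, hi'⟩ heq
  have := hi.1
  have := hi'.1
  simp only [mirror, Prod.mk.injEq] at heq ⊢
  omega

/-- For any set `Γ` of permutations and any `n ≥ 1`,
`Σ_{π ∈ S_n} s^{occ_{Γ^r}(π)} t^{ides(π)+1} = t^{n+1} · Σ_{π ∈ S_n} s^{occ_Γ(π)} t^{-(ides(π)+1)}`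
as an identity of Laurent polynomials (stated for all rational `s` and all nonzero
rational `t`). -/
theorem occ_r_ides_poly (Γ : ∀ m : ℕ, Set (Equiv.Perm (Fin m))) {n : ℕ} (hn : 1 ≤ n)
    (s t : ℚ) (ht : t ≠ 0) :
    ∑ π : Equiv.Perm (Fin n), s ^ occ (fun m => prev '' Γ m) π * t ^ (ides π + 1) =
      t ^ (n + 1) * ∑ π : Equiv.Perm (Fin n), s ^ occ Γ π * t⁻¹ ^ (ides π + 1) := by
  have hterm : ∀ π : Equiv.Perm (Fin n), t ^ (ides (prev π) + 1) =
      t ^ (n + 1) * t⁻¹ ^ (ides π + 1) := fun π => by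
    have := ides_le π
    rw [ides_prev, inv_pow, ← pow_sub₀ t ht (by omega)]
    congr 1
    omega
  calc ∑ π : Equiv.Perm (Fin n), s ^ occ (fun m => prev '' Γ m) π * t ^ (ides π + 1)
      = ∑ π : Equiv.Perm (Fin n), s ^ occ (fun m => prev '' Γ m) (prev π) *
          t ^ (ides (prev π) + 1) :=
        (Equiv.sum_comp prev_involutive.toPerm _).symm
    _ = t ^ (n + 1) * ∑ π : Equiv.Perm (Fin n), s ^ occ Γ π * t⁻¹ ^ (ides π + 1) := by
        simp only [occ_image_prev, prev_involutive _, hterm, mul_sum]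
        exact sum_congr rfl fun _ _ => mul_left_comm _ _ _
end

section
/- Let m ≥ 5 and 2 ≤ a ≤ m−2, and let σ = 12⋯(a−1)(a+1)a(a+2)(a+3)⋯m be the elementary transposition (a, a+1) in S_m. If m−a ≤ a, then the overlap set of σ is O_σ = {a, a+1, ..., m−1}; if a ≤ m−a, then O_σ = {m−a, m−a+1, ..., m−1}. -/
/-!
In 0-based positions `σ` swaps `a - 1` and `a`, so it has a single descent, between them. The
suffix window `[i, m)` contains it iff `i < a`, the prefix window `[0, m - i)` iff `a < m - i`.
A window without it is increasing, and when both windows contain it the descent sits at different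
relative places (`a - 1 - i` and `a - 1`). So the two windows have the same pattern exactly when
neither contains the descent, i.e. when `max a (m - a) ≤ i`.
-/

/-- The overlap set of a pattern `σ ∈ S_m`:
`O_σ = { i ∈ [m−1] : std(σ_{i+1} ⋯ σ_m) = std(σ_1 ⋯ σ_{m−i}) }`, where equality of
standardizations of the suffix and prefix of length `m - i` is expressed by their
being order-isomorphic (indices of `σ` are 0-based here). -/
def overlapSet {m : ℕ} (σ : Equiv.Perm (Fin m)) : Set ℕ :=
  { i | 1 ≤ i ∧ i ≤ m - 1 ∧ ∀ s t : Fin (m - i),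
      (σ ⟨i + s.val, by omega⟩ < σ ⟨i + t.val, by omega⟩ ↔
        σ ⟨s.val, by omega⟩ < σ ⟨t.val, by omega⟩) }

lemma swap_pred_apply_val {m a : ℕ} (ha : 1 ≤ a) (ham : a < m) (j : Fin m) :
    (Equiv.swap (⟨a - 1, by omega⟩ : Fin m) ⟨a, ham⟩ j).val =
      if j.val = a - 1 then a else if j.val = a then a - 1 else j.val := by
  rw [Equiv.swap_apply_def]
  split_ifs <;> simp only [Fin.ext_iff] at * <;> omega

lemma overlapSet_swap_pred {m a : ℕ} (ha : 1 ≤ a) (ham : a < m) :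
    overlapSet (Equiv.swap (⟨a - 1, by omega⟩ : Fin m) ⟨a, ham⟩) =
      Set.Icc (max a (m - a)) (m - 1) := by
  ext i
  simp only [overlapSet, Set.mem_ofPred_eq, Set.mem_Icc, max_le_iff, Fin.lt_def,
    swap_pred_apply_val ha ham]
  constructor
  · rintro ⟨hi, him, hpattern⟩
    refine ⟨⟨?_, ?_⟩, him⟩
    · -- the descent of the suffix window, at relative position `a - 1 - i`
      by_contra! hia
      have := hpattern ⟨a - 1 - i, by omega⟩ ⟨a - i, by omega⟩
      dsimp only at this
      split_ifs at this <;> omega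
    · -- the descent of the prefix window, at position `a - 1`
      by_contra! hia
      have := hpattern ⟨a - 1, by omega⟩ ⟨a, by omega⟩
      dsimp only at this
      split_ifs at this <;> omega
  · rintro ⟨⟨hai, hmai⟩, him⟩
    refine ⟨by omega, him, fun s t => ?_⟩
    have := s.isLt
    have := t.isLt
    split_ifs <;> omega

/-- Let `m ≥ 5` and `2 ≤ a ≤ m−2`, and let
`σ = 12⋯(a−1)(a+1)a(a+2)⋯m` be the elementary transposition `(a, a+1)` of `S_m`
(0-based: the swap of `a−1` and `a` in `Fin m`). If `m−a ≤ a` then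
`O_σ = {a, a+1, …, m−1}`, and if `a ≤ m−a` then `O_σ = {m−a, m−a+1, …, m−1}`. -/
theorem overlapSet_transpositional (m a : ℕ) (ha : 2 ≤ a)
    (ha' : a ≤ m - 2) :
    (m - a ≤ a →
      overlapSet (Equiv.swap (⟨a - 1, by omega⟩ : Fin m) ⟨a, by omega⟩) =
        Set.Icc a (m - 1)) ∧
    (a ≤ m - a →
      overlapSet (Equiv.swap (⟨a - 1, by omega⟩ : Fin m) ⟨a, by omega⟩) =
        Set.Icc (m - a) (m - 1)) := by
  have hσ := overlapSet_swap_pred (m := m) (a := a) (by omega) (by omega)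
  exact ⟨fun h => by rw [hσ, max_eq_left h], fun h => by rw [hσ, max_eq_right h]⟩
end

section
/- Let n be odd with n ≥ 3. The permutations π in S_n with exactly one descent whose inverse avoids 123 as a consecutive pattern are exactly the four permutations: 13⋯n 24⋯(n−1); 24⋯(n−1) 13⋯n; 24⋯(n−1) n 13⋯(n−2); and 35⋯n 1 24⋯(n−1). -/
open Finset

/-- `π ∈ S_n` avoids `123` as a consecutive pattern: there is no (1-based) index `i`
with `π_i < π_{i+1} < π_{i+2}`. -/
def Avoids123 {n : ℕ} (π : Equiv.Perm (Fin n)) : Prop :=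
  ∀ i : ℕ, 1 ≤ i → i + 2 ≤ n →
    ¬ (pval π i < pval π (i + 1) ∧ pval π (i + 1) < pval π (i + 2))

/-- The word (1-based values at 1-based positions, `0` outside `[1,n]`) of the
permutation `13⋯n 24⋯(n−1)` of `S_n`, where `n = 2e+1` is odd. -/
def word1 (n e : ℕ) : ℕ → ℕ := fun i =>
  if 1 ≤ i ∧ i ≤ n then (if i ≤ e + 1 then 2 * i - 1 else 2 * (i - e - 1)) else 0

/-- The word of the permutation `24⋯(n−1) 13⋯n` of `S_n`, where `n = 2e+1` is odd. -/
def word2 (n e : ℕ) : ℕ → ℕ := fun i =>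
  if 1 ≤ i ∧ i ≤ n then (if i ≤ e then 2 * i else 2 * (i - e) - 1) else 0

/-- The word of the permutation `24⋯(n−1) n 13⋯(n−2)` of `S_n`, where `n = 2e+1` is odd. -/
def word3 (n e : ℕ) : ℕ → ℕ := fun i =>
  if 1 ≤ i ∧ i ≤ n then
    (if i ≤ e then 2 * i else if i = e + 1 then n else 2 * (i - e - 1) - 1) else 0

/-- The word of the permutation `35⋯n 1 24⋯(n−1)` of `S_n`, where `n = 2e+1` is odd. -/
def word4 (n e : ℕ) : ℕ → ℕ := fun i =>
  if 1 ≤ i ∧ i ≤ n then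
    (if i ≤ e then 2 * i + 1 else if i = e + 1 then 1 else 2 * (i - e - 1)) else 0

private lemma pval_out {n : ℕ} (π : Equiv.Perm (Fin n)) {i : ℕ} (h : ¬(1 ≤ i ∧ i ≤ n)) :
    pval π i = 0 := by
  have h' : ¬(1 ≤ i ∧ i - 1 < n) := by omega
  unfold pval; rw [dif_neg h']

private lemma pval_range {n : ℕ} (π : Equiv.Perm (Fin n)) {i : ℕ} (h1 : 1 ≤ i) (h2 : i ≤ n) :
    1 ≤ pval π i ∧ pval π i ≤ n := by
  unfold pval
  rw [dif_pos ⟨h1, by omega⟩]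
  have := (π ⟨i - 1, by omega⟩).isLt
  omega

private lemma pval_apply {n : ℕ} (π : Equiv.Perm (Fin n)) (j : Fin n) :
    pval π (j.val + 1) = (π j : ℕ) + 1 := by
  unfold pval
  rw [dif_pos ⟨by omega, by simp⟩]
  congr 2

private lemma pval_inv_pval {n : ℕ} (π : Equiv.Perm (Fin n)) {i : ℕ} (h1 : 1 ≤ i) (h2 : i ≤ n) :
    pval π⁻¹ (pval π i) = i := by
  obtain ⟨j, rfl⟩ : ∃ j : Fin n, i = j.val + 1 := ⟨⟨i - 1, by omega⟩, by simp; omega⟩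
  rw [pval_apply, pval_apply, Equiv.Perm.inv_def, Equiv.symm_apply_apply]

private lemma pval_injOn {n : ℕ} (π : Equiv.Perm (Fin n)) {i j : ℕ} (hi1 : 1 ≤ i) (hi2 : i ≤ n)
    (hj1 : 1 ≤ j) (hj2 : j ≤ n) (h : pval π i = pval π j) : i = j := by
  have h1 := pval_inv_pval π hi1 hi2
  rw [h, pval_inv_pval π hj1 hj2] at h1
  exact h1.symm

private lemma pval_eq_of_inv {n : ℕ} (π : Equiv.Perm (Fin n)) {i v : ℕ} (hi1 : 1 ≤ i)
    (hi2 : i ≤ n) (hv1 : 1 ≤ v) (hv2 : v ≤ n) (h : pval π⁻¹ v = i) : pval π i = v := by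
  have hr := pval_range π hi1 hi2
  apply pval_injOn π⁻¹ hr.1 hr.2 hv1 hv2
  rw [pval_inv_pval π hi1 hi2]
  exact h.symm

private lemma chain_lt (f : ℕ → ℕ) (a b : ℕ)
    (h : ∀ i, a ≤ i → i + 1 ≤ b → f i < f (i + 1)) :
    ∀ i j, a ≤ i → i < j → j ≤ b → f i < f j := by
  intro i j hi hij hjb
  induction j with
  | zero => omega
  | succ k ih =>
    rcases Nat.lt_or_ge i k with h1 | h1
    · exact lt_trans (ih h1 (by omega)) (h k (by omega) (by omega))
    · have hik : i = k := by omega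
      subst hik
      exact h i hi hjb

private lemma mono_bounds (g : ℕ → ℕ) (m lo hi : ℕ)
    (hstep : ∀ j, 1 ≤ j → j + 1 ≤ m → g j < g (j + 1))
    (hlo : lo ≤ g 1) (hhi : g m ≤ hi) :
    ∀ j, 1 ≤ j → j ≤ m → lo + j - 1 ≤ g j ∧ g j + (m - j) ≤ hi := by
  have up : ∀ j, 1 ≤ j → j ≤ m → lo + j - 1 ≤ g j := by
    intro j
    induction j with
    | zero => omega
    | succ k ih =>
      intro _ hjm
      rcases Nat.eq_zero_or_pos k with rfl | hk
      · simpa using hlo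
      · have h1 := ih (by omega) (by omega)
        have h2 := hstep k hk (by omega)
        omega
  have down : ∀ t j, 1 ≤ j → j ≤ m → m - j = t → g j + t ≤ hi := by
    intro t
    induction t with
    | zero =>
      intro j hj hjm ht
      have hjm' : j = m := by omega
      subst hjm'; omega
    | succ s ih =>
      intro j hj hjm ht
      have h1 := hstep j hj (by omega)
      have h2 := ih (j + 1) (by omega) (by omega) (by omega)
      omega
  intro j hj hjm
  exact ⟨up j hj hjm, by have := down (m - j) j hj hjm rfl; omega⟩


/-- Let `n = 2e+1 ≥ 3` be odd. The permutations `π ∈ S_n` with exactly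
one descent whose inverse avoids `123` as a consecutive pattern are exactly the four
permutations `13⋯n 24⋯(n−1)`, `24⋯(n−1) 13⋯n`, `24⋯(n−1) n 13⋯(n−2)`, and
`35⋯n 1 24⋯(n−1)`. -/
theorem des_one_inv_avoids123_odd {n e : ℕ} (hn : 3 ≤ n) (hne : n = 2 * e + 1)
    (π : Equiv.Perm (Fin n)) :
    (des π = 1 ∧ Avoids123 π⁻¹) ↔
      (pval π = word1 n e ∨ pval π = word2 n e ∨ pval π = word3 n e ∨
        pval π = word4 n e) := by
  have he : 1 ≤ e := by omega
  constructor
  · rintro ⟨h1, hav⟩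
    unfold Avoids123 at hav
    obtain ⟨d, hd⟩ := Finset.card_eq_one.mp h1
    have hdmem : d ∈ desSet π := hd ▸ Finset.mem_singleton_self d
    rw [desSet, Finset.mem_filter, Finset.mem_Icc] at hdmem
    obtain ⟨⟨hd1, hd2⟩, hdes⟩ := hdmem
    have hasc : ∀ i, 1 ≤ i → i + 1 ≤ n → i ≠ d → pval π i < pval π (i + 1) := by
      intro i hi1 hi2 hid
      have hni : i ∉ desSet π := by rw [hd, Finset.mem_singleton]; exact hid
      rw [desSet, Finset.mem_filter, Finset.mem_Icc] at hni
      push_neg at hni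
      have hle := hni ⟨hi1, by omega⟩
      have hneq : pval π i ≠ pval π (i + 1) := by
        intro hcon
        have := pval_injOn π hi1 (by omega) (by omega) (by omega) hcon
        omega
      omega
    have run1 : ∀ i j, 1 ≤ i → i < j → j ≤ d → pval π i < pval π j := by
      intro i j hi hij hjd
      exact chain_lt (pval π) 1 d (fun k hk1 hk2 => hasc k hk1 (by omega) (by omega))
        i j hi hij hjd
    have run2 : ∀ i j, d + 1 ≤ i → i < j → j ≤ n → pval π i < pval π j := by
      intro i j hi hij hjn
      exact chain_lt (pval π) (d + 1) n (fun k hk1 hk2 => hasc k (by omega) hk2 (by omega))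
        i j hi hij hjn
    have qr : ∀ v, 1 ≤ v → v ≤ n → 1 ≤ pval π⁻¹ v ∧ pval π⁻¹ v ≤ n :=
      fun v a b => pval_range π⁻¹ a b
    have pq : ∀ v, 1 ≤ v → v ≤ n → pval π (pval π⁻¹ v) = v := by
      intro v a b
      have := pval_inv_pval π⁻¹ a b
      rwa [inv_inv] at this
    have C1 : ∀ u v, 1 ≤ u → u < v → v ≤ n → pval π⁻¹ u ≤ d → pval π⁻¹ v ≤ d →
        pval π⁻¹ u < pval π⁻¹ v := by
      intro u v hu huv hv hud hvd
      rcases Nat.lt_trichotomy (pval π⁻¹ u) (pval π⁻¹ v) with h | h | h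
      · exact h
      · exfalso
        have := pval_injOn π⁻¹ hu (by omega) (by omega) hv h
        omega
      · exfalso
        have h2 := run1 (pval π⁻¹ v) (pval π⁻¹ u) (qr v (by omega) hv).1 h hud
        rw [pq u hu (by omega), pq v (by omega) hv] at h2
        omega
    have C2 : ∀ u v, 1 ≤ u → u < v → v ≤ n → d < pval π⁻¹ u → d < pval π⁻¹ v →
        pval π⁻¹ u < pval π⁻¹ v := by
      intro u v hu huv hv hud hvd
      rcases Nat.lt_trichotomy (pval π⁻¹ u) (pval π⁻¹ v) with h | h | h
      · exact h
      · exfalso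
        have := pval_injOn π⁻¹ hu (by omega) (by omega) hv h
        omega
      · exfalso
        have h2 := run2 (pval π⁻¹ v) (pval π⁻¹ u) (by omega) h (qr u hu (by omega)).2
        rw [pq u hu (by omega), pq v (by omega) hv] at h2
        omega
    have K1 : ∀ v, 1 ≤ v → v + 2 ≤ n → pval π⁻¹ v ≤ d → pval π⁻¹ (v + 1) ≤ d → False := by
      intro v hv1 hv2 ha hb
      refine hav v hv1 hv2 ⟨C1 v (v + 1) hv1 (by omega) (by omega) ha hb, ?_⟩
      by_cases hc : pval π⁻¹ (v + 2) ≤ d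
      · exact C1 (v + 1) (v + 2) (by omega) (by omega) (by omega) hb hc
      · have := (qr (v + 1) (by omega) (by omega)).2
        omega
    have K2 : ∀ v, 2 ≤ v → v + 1 ≤ n → d < pval π⁻¹ v → d < pval π⁻¹ (v + 1) → False := by
      intro v hv1 hv2 ha hb
      obtain ⟨w, rfl⟩ : ∃ w, v = w + 1 := ⟨v - 1, by omega⟩
      refine hav w (by omega) (by omega) ⟨?_, C2 (w + 1) (w + 2) (by omega) (by omega) (by omega) ha hb⟩
      by_cases hc : pval π⁻¹ w ≤ d
      · omega
      · exact C2 w (w + 1) (by omega) (by omega) (by omega) (by omega) ha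
    by_cases P1 : pval π⁻¹ 1 ≤ d
    · by_cases P2 : pval π⁻¹ 2 ≤ d
      · exact (K1 1 (by omega) (by omega) P1 P2).elim
      · -- word1 : odds then evens
        have pat : ∀ v, 1 ≤ v → v ≤ n → (pval π⁻¹ v ≤ d ↔ v % 2 = 1) := by
          intro v
          induction v with
          | zero => omega
          | succ w ih =>
            intro _ hvn
            rcases Nat.lt_or_ge w 2 with hw | hw
            · have : w = 0 ∨ w = 1 := by omega
              rcases this with rfl | rfl
              · show pval π⁻¹ 1 ≤ d ↔ 1 % 2 = 1
                omega
              · show pval π⁻¹ 2 ≤ d ↔ 2 % 2 = 1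
                omega
            · have ihw := ih (by omega) (by omega)
              by_cases hpar : w % 2 = 1
              · have hnb : ¬ pval π⁻¹ (w + 1) ≤ d :=
                  fun hcon => K1 w (by omega) (by omega) (ihw.2 hpar) hcon
                omega
              · have hb : pval π⁻¹ (w + 1) ≤ d := by
                  by_contra hcon
                  exact K2 w hw hvn (by omega) (by omega)
                omega
        have hA := mono_bounds (fun j => pval π⁻¹ (2 * j - 1)) (e + 1) 1 d
          (by
            intro j hj hjm
            show pval π⁻¹ (2 * j - 1) < pval π⁻¹ (2 * (j + 1) - 1)
            exact C1 (2 * j - 1) (2 * (j + 1) - 1) (by omega) (by omega) (by omega)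
              ((pat (2 * j - 1) (by omega) (by omega)).2 (by omega))
              ((pat (2 * (j + 1) - 1) (by omega) (by omega)).2 (by omega)))
          (by
            show (1 : ℕ) ≤ pval π⁻¹ (2 * 1 - 1)
            have h21 : 2 * 1 - 1 = 1 := by omega
            rw [h21]; exact (qr 1 (by omega) (by omega)).1)
          (by
            show pval π⁻¹ (2 * (e + 1) - 1) ≤ d
            have harg : 2 * (e + 1) - 1 = n := by omega
            rw [harg]
            exact (pat n (by omega) (by omega)).2 (by omega))
        have hB := mono_bounds (fun j => pval π⁻¹ (2 * j)) e (d + 1) n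
          (by
            intro j hj hjm
            show pval π⁻¹ (2 * j) < pval π⁻¹ (2 * (j + 1))
            refine C2 (2 * j) (2 * (j + 1)) (by omega) (by omega) (by omega) ?_ ?_
            · have := pat (2 * j) (by omega) (by omega); omega
            · have := pat (2 * (j + 1)) (by omega) (by omega); omega)
          (by
            show d + 1 ≤ pval π⁻¹ (2 * 1)
            have := pat (2 * 1) (by omega) (by omega); omega)
          (by
            show pval π⁻¹ (2 * e) ≤ n
            exact (qr (2 * e) (by omega) (by omega)).2)
        have hd' : d = e + 1 := by
          have h1 := hA (e + 1) (by omega) (by omega)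
          have h2 := hB 1 (by omega) he
          omega
        left
        funext i
        by_cases hi : 1 ≤ i ∧ i ≤ n
        · simp only [word1, if_pos hi]
          by_cases hie : i ≤ e + 1
          · rw [if_pos hie]
            refine pval_eq_of_inv π hi.1 hi.2 (by omega) (by omega) ?_
            have := hA i hi.1 hie
            omega
          · rw [if_neg hie]
            refine pval_eq_of_inv π hi.1 hi.2 (by omega) (by omega) ?_
            have := hB (i - e - 1) (by omega) (by omega)
            have harg : 2 * (i - e - 1) = 2 * (i - e - 1) := rfl
            omega
        · rw [pval_out π hi]
          simp only [word1, if_neg hi]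
    · by_cases P2 : pval π⁻¹ 2 ≤ d
      · -- word2 or word3 : evens first
        have pat : ∀ v, 1 ≤ v → v ≤ n - 1 → (pval π⁻¹ v ≤ d ↔ v % 2 = 0) := by
          intro v
          induction v with
          | zero => omega
          | succ w ih =>
            intro _ hvn
            rcases Nat.lt_or_ge w 2 with hw | hw
            · have : w = 0 ∨ w = 1 := by omega
              rcases this with rfl | rfl
              · show pval π⁻¹ 1 ≤ d ↔ 1 % 2 = 0
                omega
              · show pval π⁻¹ 2 ≤ d ↔ 2 % 2 = 0
                omega
            · have ihw := ih (by omega) (by omega)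
              by_cases hpar : w % 2 = 0
              · have hnb : ¬ pval π⁻¹ (w + 1) ≤ d :=
                  fun hcon => K1 w (by omega) (by omega) (ihw.2 hpar) hcon
                omega
              · have hb : pval π⁻¹ (w + 1) ≤ d := by
                  by_contra hcon
                  exact K2 w hw (by omega) (by omega) (by omega)
                omega
        by_cases Pn : pval π⁻¹ n ≤ d
        · -- word3
          have hA := mono_bounds (fun j => pval π⁻¹ (2 * j)) e 1 d
            (by
              intro j hj hjm
              show pval π⁻¹ (2 * j) < pval π⁻¹ (2 * (j + 1))
              exact C1 (2 * j) (2 * (j + 1)) (by omega) (by omega) (by omega)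
                ((pat (2 * j) (by omega) (by omega)).2 (by omega))
                ((pat (2 * (j + 1)) (by omega) (by omega)).2 (by omega)))
            (by
              show (1 : ℕ) ≤ pval π⁻¹ (2 * 1)
              exact (qr (2 * 1) (by omega) (by omega)).1)
            (by
              show pval π⁻¹ (2 * e) ≤ d
              exact (pat (2 * e) (by omega) (by omega)).2 (by omega))
          have hB := mono_bounds (fun j => pval π⁻¹ (2 * j - 1)) e (d + 1) n
            (by
              intro j hj hjm
              show pval π⁻¹ (2 * j - 1) < pval π⁻¹ (2 * (j + 1) - 1)
              refine C2 (2 * j - 1) (2 * (j + 1) - 1) (by omega) (by omega) (by omega) ?_ ?_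
              · have := pat (2 * j - 1) (by omega) (by omega); omega
              · have := pat (2 * (j + 1) - 1) (by omega) (by omega); omega)
            (by
              show d + 1 ≤ pval π⁻¹ (2 * 1 - 1)
              have h21 : 2 * 1 - 1 = 1 := by omega
              rw [h21]
              omega)
            (by
              show pval π⁻¹ (2 * e - 1) ≤ n
              exact (qr (2 * e - 1) (by omega) (by omega)).2)
          have hlast : pval π⁻¹ (2 * e) < pval π⁻¹ n :=
            C1 (2 * e) n (by omega) (by omega) (by omega)
              ((pat (2 * e) (by omega) (by omega)).2 (by omega)) Pn
          have hd' : d = e + 1 := by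
            have h1 := hA e (by omega) (by omega)
            have h2 := hB e (by omega) (by omega)
            omega
          have hA2 := mono_bounds (fun j => pval π⁻¹ (2 * j)) e 1 e
            (by
              intro j hj hjm
              show pval π⁻¹ (2 * j) < pval π⁻¹ (2 * (j + 1))
              exact C1 (2 * j) (2 * (j + 1)) (by omega) (by omega) (by omega)
                ((pat (2 * j) (by omega) (by omega)).2 (by omega))
                ((pat (2 * (j + 1)) (by omega) (by omega)).2 (by omega)))
            (by
              show (1 : ℕ) ≤ pval π⁻¹ (2 * 1)
              exact (qr (2 * 1) (by omega) (by omega)).1)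
            (by
              show pval π⁻¹ (2 * e) ≤ e
              omega)
          right; right; left
          funext i
          by_cases hi : 1 ≤ i ∧ i ≤ n
          · simp only [word3, if_pos hi]
            by_cases hie : i ≤ e
            · rw [if_pos hie]
              refine pval_eq_of_inv π hi.1 hi.2 (by omega) (by omega) ?_
              have := hA2 i hi.1 hie
              omega
            · rw [if_neg hie]
              by_cases hie1 : i = e + 1
              · rw [if_pos hie1]
                refine pval_eq_of_inv π hi.1 hi.2 (by omega) (by omega) ?_
                have h1 := hA2 e (by omega) (by omega)
                omega
              · rw [if_neg hie1]
                refine pval_eq_of_inv π hi.1 hi.2 (by omega) (by omega) ?_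
                have := hB (i - e - 1) (by omega) (by omega)
                omega
          · rw [pval_out π hi]
            simp only [word3, if_neg hi]
        · -- word2
          have hA := mono_bounds (fun j => pval π⁻¹ (2 * j)) e 1 d
            (by
              intro j hj hjm
              show pval π⁻¹ (2 * j) < pval π⁻¹ (2 * (j + 1))
              exact C1 (2 * j) (2 * (j + 1)) (by omega) (by omega) (by omega)
                ((pat (2 * j) (by omega) (by omega)).2 (by omega))
                ((pat (2 * (j + 1)) (by omega) (by omega)).2 (by omega)))
            (by
              show (1 : ℕ) ≤ pval π⁻¹ (2 * 1)
              exact (qr (2 * 1) (by omega) (by omega)).1)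
            (by
              show pval π⁻¹ (2 * e) ≤ d
              exact (pat (2 * e) (by omega) (by omega)).2 (by omega))
          have hB := mono_bounds (fun j => pval π⁻¹ (2 * j - 1)) (e + 1) (d + 1) n
            (by
              intro j hj hjm
              show pval π⁻¹ (2 * j - 1) < pval π⁻¹ (2 * (j + 1) - 1)
              refine C2 (2 * j - 1) (2 * (j + 1) - 1) (by omega) (by omega) (by omega) ?_ ?_
              · have := pat (2 * j - 1) (by omega) (by omega); omega
              · by_cases hj2 : 2 * (j + 1) - 1 = n
                · rw [hj2]; omega
                · have := pat (2 * (j + 1) - 1) (by omega) (by omega); omega)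
            (by
              show d + 1 ≤ pval π⁻¹ (2 * 1 - 1)
              have h21 : 2 * 1 - 1 = 1 := by omega
              rw [h21]
              omega)
            (by
              show pval π⁻¹ (2 * (e + 1) - 1) ≤ n
              exact (qr (2 * (e + 1) - 1) (by omega) (by omega)).2)
          have hd' : d = e := by
            have h1 := hA e (by omega) (by omega)
            have h2 := hB (e + 1) (by omega) (by omega)
            omega
          right; left
          funext i
          by_cases hi : 1 ≤ i ∧ i ≤ n
          · simp only [word2, if_pos hi]
            by_cases hie : i ≤ e
            · rw [if_pos hie]
              refine pval_eq_of_inv π hi.1 hi.2 (by omega) (by omega) ?_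
              have := hA i hi.1 hie
              omega
            · rw [if_neg hie]
              refine pval_eq_of_inv π hi.1 hi.2 (by omega) (by omega) ?_
              have := hB (i - e) (by omega) (by omega)
              omega
          · rw [pval_out π hi]
            simp only [word2, if_neg hi]
      · -- word4
        have pat : ∀ v, 1 ≤ v → v ≤ n → (pval π⁻¹ v ≤ d ↔ (3 ≤ v ∧ v % 2 = 1)) := by
          intro v
          induction v with
          | zero => omega
          | succ w ih =>
            intro _ hvn
            rcases Nat.lt_or_ge w 2 with hw | hw
            · have : w = 0 ∨ w = 1 := by omega
              rcases this with rfl | rfl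
              · show pval π⁻¹ 1 ≤ d ↔ (3 ≤ 1 ∧ 1 % 2 = 1)
                omega
              · show pval π⁻¹ 2 ≤ d ↔ (3 ≤ 2 ∧ 2 % 2 = 1)
                omega
            · have ihw := ih (by omega) (by omega)
              by_cases hpar : w % 2 = 1
              · have hnb : ¬ pval π⁻¹ (w + 1) ≤ d :=
                  fun hcon => K1 w (by omega) (by omega) (ihw.2 (by omega)) hcon
                omega
              · have hb : pval π⁻¹ (w + 1) ≤ d := by
                  by_contra hcon
                  exact K2 w hw hvn (by omega) (by omega)
                omega
        have hA := mono_bounds (fun j => pval π⁻¹ (2 * j + 1)) e 1 d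
          (by
            intro j hj hjm
            show pval π⁻¹ (2 * j + 1) < pval π⁻¹ (2 * (j + 1) + 1)
            exact C1 (2 * j + 1) (2 * (j + 1) + 1) (by omega) (by omega) (by omega)
              ((pat (2 * j + 1) (by omega) (by omega)).2 (by omega))
              ((pat (2 * (j + 1) + 1) (by omega) (by omega)).2 (by omega)))
          (by
            show (1 : ℕ) ≤ pval π⁻¹ (2 * 1 + 1)
            exact (qr (2 * 1 + 1) (by omega) (by omega)).1)
          (by
            show pval π⁻¹ (2 * e + 1) ≤ d
            have harg : 2 * e + 1 = n := by omega
            rw [harg]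
            exact (pat n (by omega) (by omega)).2 (by omega))
        have h12 : pval π⁻¹ 1 < pval π⁻¹ 2 := by
          refine C2 1 2 (by omega) (by omega) (by omega) (by omega) ?_
          have := pat 2 (by omega) (by omega); omega
        have hB := mono_bounds (fun j => pval π⁻¹ (2 * j)) e (d + 2) n
          (by
            intro j hj hjm
            show pval π⁻¹ (2 * j) < pval π⁻¹ (2 * (j + 1))
            refine C2 (2 * j) (2 * (j + 1)) (by omega) (by omega) (by omega) ?_ ?_
            · have := pat (2 * j) (by omega) (by omega); omega
            · have := pat (2 * (j + 1)) (by omega) (by omega); omega)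
          (by
            show d + 2 ≤ pval π⁻¹ (2 * 1)
            have h21 : (2 : ℕ) * 1 = 2 := by omega
            rw [h21]
            omega)
          (by
            show pval π⁻¹ (2 * e) ≤ n
            exact (qr (2 * e) (by omega) (by omega)).2)
        have hd' : d = e := by
          have h1 := hA e (by omega) (by omega)
          have h2 := hB e (by omega) (by omega)
          omega
        have hq1 : pval π⁻¹ 1 = e + 1 := by
          have h2 := hB 1 (by omega) he
          have h21 : (2 : ℕ) * 1 = 2 := by omega
          rw [h21] at h2
          omega
        right; right; right
        funext i
        by_cases hi : 1 ≤ i ∧ i ≤ n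
        · simp only [word4, if_pos hi]
          by_cases hie : i ≤ e
          · rw [if_pos hie]
            refine pval_eq_of_inv π hi.1 hi.2 (by omega) (by omega) ?_
            have := hA i hi.1 hie
            omega
          · rw [if_neg hie]
            by_cases hie1 : i = e + 1
            · rw [if_pos hie1]
              refine pval_eq_of_inv π hi.1 hi.2 (by omega) (by omega) ?_
              omega
            · rw [if_neg hie1]
              refine pval_eq_of_inv π hi.1 hi.2 (by omega) (by omega) ?_
              have := hB (i - e - 1) (by omega) (by omega)
              omega
        · rw [pval_out π hi]
          simp only [word4, if_neg hi]
  · intro hp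
    have key : ∀ (w : ℕ → ℕ), pval π = w → ∀ i, 1 ≤ i → i ≤ n → pval π⁻¹ (w i) = i := by
      intro w hw i h1 h2
      rw [← hw]
      exact pval_inv_pval π h1 h2
    rcases hp with hp | hp | hp | hp
    · constructor
      · have hset : desSet π = {e + 1} := by
          ext i
          simp only [desSet, Finset.mem_filter, Finset.mem_Icc, Finset.mem_singleton, hp, word1]
          split_ifs <;> omega
        simp [des, hset]
      · have k := key (word1 n e) hp
        intro v hv1 hv2
        rintro ⟨ha, hb⟩
        by_cases hpar : v % 2 = 1
        · obtain ⟨j, hj1, hj2⟩ : ∃ j, 1 ≤ j ∧ v = 2 * j - 1 := ⟨(v + 1) / 2, by omega, by omega⟩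
          have k1 := k (e + 1 + j) (by omega) (by omega)
          rw [show word1 n e (e + 1 + j) = v + 1 by simp only [word1]; split_ifs <;> omega] at k1
          have k2 := k (j + 1) (by omega) (by omega)
          rw [show word1 n e (j + 1) = v + 2 by simp only [word1]; split_ifs <;> omega] at k2
          rw [k1, k2] at hb
          omega
        · obtain ⟨j, hj1, hj2⟩ : ∃ j, 1 ≤ j ∧ v = 2 * j := ⟨v / 2, by omega, by omega⟩
          have k1 := k (e + 1 + j) (by omega) (by omega)
          rw [show word1 n e (e + 1 + j) = v by simp only [word1]; split_ifs <;> omega] at k1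
          have k2 := k (j + 1) (by omega) (by omega)
          rw [show word1 n e (j + 1) = v + 1 by simp only [word1]; split_ifs <;> omega] at k2
          rw [k1, k2] at ha
          omega
    · constructor
      · have hset : desSet π = {e} := by
          ext i
          simp only [desSet, Finset.mem_filter, Finset.mem_Icc, Finset.mem_singleton, hp, word2]
          split_ifs <;> omega
        simp [des, hset]
      · have k := key (word2 n e) hp
        intro v hv1 hv2
        rintro ⟨ha, hb⟩
        by_cases hpar : v % 2 = 1
        · obtain ⟨j, hj1, hj2⟩ : ∃ j, 1 ≤ j ∧ v = 2 * j - 1 := ⟨(v + 1) / 2, by omega, by omega⟩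
          have k1 := k (e + j) (by omega) (by omega)
          rw [show word2 n e (e + j) = v by simp only [word2]; split_ifs <;> omega] at k1
          have k2 := k j (by omega) (by omega)
          rw [show word2 n e j = v + 1 by simp only [word2]; split_ifs <;> omega] at k2
          rw [k1, k2] at ha
          omega
        · obtain ⟨j, hj1, hj2⟩ : ∃ j, 1 ≤ j ∧ v = 2 * j := ⟨v / 2, by omega, by omega⟩
          have k1 := k (e + j + 1) (by omega) (by omega)
          rw [show word2 n e (e + j + 1) = v + 1 by simp only [word2]; split_ifs <;> omega] at k1
          have k2 := k (j + 1) (by omega) (by omega)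
          rw [show word2 n e (j + 1) = v + 2 by simp only [word2]; split_ifs <;> omega] at k2
          rw [k1, k2] at hb
          omega
    · constructor
      · have hset : desSet π = {e + 1} := by
          ext i
          simp only [desSet, Finset.mem_filter, Finset.mem_Icc, Finset.mem_singleton, hp, word3]
          split_ifs <;> omega
        simp [des, hset]
      · have k := key (word3 n e) hp
        intro v hv1 hv2
        rintro ⟨ha, hb⟩
        by_cases hpar : v % 2 = 1
        · obtain ⟨j, hj1, hj2⟩ : ∃ j, 1 ≤ j ∧ v = 2 * j - 1 := ⟨(v + 1) / 2, by omega, by omega⟩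
          have k1 := k (e + 1 + j) (by omega) (by omega)
          rw [show word3 n e (e + 1 + j) = v by simp only [word3]; split_ifs <;> omega] at k1
          have k2 := k j (by omega) (by omega)
          rw [show word3 n e j = v + 1 by simp only [word3]; split_ifs <;> omega] at k2
          rw [k1, k2] at ha
          omega
        · obtain ⟨j, hj1, hj2⟩ : ∃ j, 1 ≤ j ∧ v = 2 * j := ⟨v / 2, by omega, by omega⟩
          have k1 := k (e + j + 2) (by omega) (by omega)
          rw [show word3 n e (e + j + 2) = v + 1 by simp only [word3]; split_ifs <;> omega] at k1
          have k2 := k (j + 1) (by omega) (by omega)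
          rw [show word3 n e (j + 1) = v + 2 by simp only [word3]; split_ifs <;> omega] at k2
          rw [k1, k2] at hb
          omega
    · constructor
      · have hset : desSet π = {e} := by
          ext i
          simp only [desSet, Finset.mem_filter, Finset.mem_Icc, Finset.mem_singleton, hp, word4]
          split_ifs <;> omega
        simp [des, hset]
      · have k := key (word4 n e) hp
        intro v hv1 hv2
        rintro ⟨ha, hb⟩
        by_cases hpar : v % 2 = 1
        · obtain ⟨j, hj2⟩ : ∃ j, v = 2 * j + 1 := ⟨v / 2, by omega⟩
          have k1 := k (e + j + 2) (by omega) (by omega)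
          rw [show word4 n e (e + j + 2) = v + 1 by simp only [word4]; split_ifs <;> omega] at k1
          have k2 := k (j + 1) (by omega) (by omega)
          rw [show word4 n e (j + 1) = v + 2 by simp only [word4]; split_ifs <;> omega] at k2
          rw [k1, k2] at hb
          omega
        · obtain ⟨j, hj1, hj2⟩ : ∃ j, 1 ≤ j ∧ v = 2 * j := ⟨v / 2, by omega, by omega⟩
          have k1 := k (e + 1 + j) (by omega) (by omega)
          rw [show word4 n e (e + 1 + j) = v by simp only [word4]; split_ifs <;> omega] at k1
          have k2 := k j (by omega) (by omega)
          rw [show word4 n e j = v + 1 by simp only [word4]; split_ifs <;> omega] at k2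
          rw [k1, k2] at ha
          omega
end

section
/- Let n ≥ 1 and m ≥ 3. The number of permutations π in S_n avoiding 12⋯m as a consecutive pattern with ipk(π) = 0 equals the order-(m−1) Fibonacci number f_n^{(m-1)}. -/
open Finset

/-- `π ∈ S_n` avoids the monotone pattern `12⋯m` as a consecutive pattern: no `m`
consecutive entries of `π` are increasing (positions are 1-based). -/
def AvoidsInc {n : ℕ} (m : ℕ) (π : Equiv.Perm (Fin n)) : Prop :=
  ∀ i : ℕ, 1 ≤ i → i + m ≤ n + 1 →
    ¬ (∀ j : ℕ, j + 1 < m → pval π (i + j) < pval π (i + j + 1))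

/-- The order-`k` Fibonacci numbers: `f 0 = 1`, `f n = 0` for `n < 0`, and
`f n = f (n-1) + f (n-2) + ⋯ + f (n-k)` for `n ≥ 1`. -/
def kfib (k : ℕ) : ℕ → ℕ
  | 0 => 1
  | n + 1 => ∑ l ∈ Finset.range k, if _h : l ≤ n then kfib k (n - l) else 0
termination_by n => n
decreasing_by omega

namespace Stmt15

/-- number of elements of `P` below `p` -/
def cntA (P : Finset ℕ) (p : ℕ) : ℕ := (P.filter (· < p)).card

lemma cntA_le_self (P : Finset ℕ) (p : ℕ) : cntA P p ≤ p := by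
  have h : P.filter (· < p) ⊆ Finset.range p := by
    intro x hx; exact Finset.mem_range.mpr (Finset.mem_filter.mp hx).2
  simpa [cntA] using Finset.card_le_card h

lemma cntA_mono (P : Finset ℕ) {p q : ℕ} (h : p ≤ q) : cntA P p ≤ cntA P q := by
  apply Finset.card_le_card
  intro x hx
  rcases Finset.mem_filter.mp hx with ⟨h1, h2⟩
  exact Finset.mem_filter.mpr ⟨h1, lt_of_lt_of_le h2 h⟩

lemma cntA_succ_mem {P : Finset ℕ} {p : ℕ} (hp : p ∈ P) :
    cntA P (p + 1) = cntA P p + 1 := by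
  have : P.filter (· < p + 1) = insert p (P.filter (· < p)) := by
    ext x
    simp only [Finset.mem_filter, Finset.mem_insert]
    constructor
    · rintro ⟨h1, h2⟩
      rcases Nat.lt_succ_iff_lt_or_eq.mp h2 with h | h
      · exact Or.inr ⟨h1, h⟩
      · exact Or.inl h
    · rintro (rfl | ⟨h1, h2⟩)
      · exact ⟨hp, Nat.lt_succ_self _⟩
      · exact ⟨h1, Nat.lt_succ_of_lt h2⟩
  rw [cntA, this, Finset.card_insert_of_notMem (by simp)]
  rfl

lemma cntA_succ_not_mem {P : Finset ℕ} {p : ℕ} (hp : p ∉ P) :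
    cntA P (p + 1) = cntA P p := by
  unfold cntA
  congr 1
  ext x
  simp only [Finset.mem_filter]
  constructor
  · rintro ⟨h1, h2⟩
    refine ⟨h1, ?_⟩
    rcases Nat.lt_succ_iff_lt_or_eq.mp h2 with h | rfl
    · exact h
    · exact absurd h1 hp
  · rintro ⟨h1, h2⟩; exact ⟨h1, Nat.lt_succ_of_lt h2⟩

lemma cntA_succ_le (P : Finset ℕ) (p : ℕ) : cntA P (p + 1) ≤ cntA P p + 1 := by
  by_cases hp : p ∈ P
  · rw [cntA_succ_mem hp]
  · rw [cntA_succ_not_mem hp]; omega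

lemma cntA_window (P : Finset ℕ) (p d : ℕ) : cntA P (p + d) ≤ cntA P p + d := by
  induction d with
  | zero => simp
  | succ d ih =>
      calc cntA P (p + d + 1) ≤ cntA P (p + d) + 1 := cntA_succ_le _ _
        _ ≤ cntA P p + d + 1 := by omega

lemma cntA_le_of_le (P : Finset ℕ) {p q : ℕ} (h : p ≤ q) : cntA P q ≤ cntA P p + (q - p) := by
  have := cntA_window P p (q - p)
  rwa [Nat.add_sub_cancel' h] at this

lemma cntA_lt_of_mem_lt {P : Finset ℕ} {p q : ℕ} (hp : p ∈ P) (h : p < q) :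
    cntA P p < cntA P q := by
  have h1 := cntA_succ_mem hp
  have h2 := cntA_mono P (show p + 1 ≤ q from h)
  omega

lemma cntA_lt_card {P : Finset ℕ} {p : ℕ} (hp : p ∈ P) : cntA P p < P.card := by
  have h : P.filter (· < p) ⊆ P.erase p := by
    intro x hx
    rcases Finset.mem_filter.mp hx with ⟨h1, h2⟩
    exact Finset.mem_erase.mpr ⟨by omega, h1⟩
  exact lt_of_le_of_lt (Finset.card_le_card h) (Finset.card_erase_lt_of_mem hp)

lemma cntA_eq_card {P : Finset ℕ} {n : ℕ} (hP : P ⊆ Finset.range n) : cntA P n = P.card := by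
  unfold cntA
  rw [Finset.filter_true_of_mem (fun x hx => Finset.mem_range.mp (hP hx))]

/-- the canonical permutation word attached to a set of "run starts" -/
def fP (P : Finset ℕ) (p : ℕ) : ℕ :=
  if p ∈ P then P.card - 1 - cntA P p else P.card + (p - cntA P p)

lemma fP_mem_lt {P : Finset ℕ} {p : ℕ} (hp : p ∈ P) : fP P p < P.card := by
  rw [fP, if_pos hp]
  have := cntA_lt_card hp
  have : 1 ≤ P.card := Finset.card_pos.mpr ⟨p, hp⟩
  omega

lemma fP_not_mem_ge {P : Finset ℕ} {p : ℕ} (hp : p ∉ P) : P.card ≤ fP P p := by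
  rw [fP, if_neg hp]; omega

lemma fP_mem_eq {P : Finset ℕ} {p : ℕ} (hp : p ∈ P) :
    fP P p = P.card - 1 - cntA P p := if_pos hp

lemma fP_anti_mem {P : Finset ℕ} {p q : ℕ} (hp : p ∈ P) (hq : q ∈ P) (h : p < q) :
    fP P q < fP P p := by
  rw [fP, fP, if_pos hp, if_pos hq]
  have h1 := cntA_lt_of_mem_lt hp h
  have h2 := cntA_lt_card hq
  omega

lemma fP_mono_not_mem {P : Finset ℕ} {p q : ℕ} (hp : p ∉ P) (hq : q ∉ P) (h : p < q) :
    fP P p < fP P q := by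
  rw [fP, fP, if_neg hp, if_neg hq]
  have h1 : cntA P q ≤ cntA P (p+1) + (q - (p+1)) := cntA_le_of_le P (by omega)
  rw [cntA_succ_not_mem hp] at h1
  have h2 := cntA_le_self P p
  omega

lemma fP_inj {P : Finset ℕ} {p q : ℕ} (h : fP P p = fP P q) : p = q := by
  by_contra hne
  have key : ∀ a b : ℕ, a < b → fP P a ≠ fP P b := by
    intro a b hab
    by_cases ha : a ∈ P <;> by_cases hb : b ∈ P
    · exact (Nat.ne_of_lt (fP_anti_mem ha hb hab)).symm
    · have := fP_mem_lt ha; have := fP_not_mem_ge hb; omega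
    · have := fP_mem_lt hb; have := fP_not_mem_ge ha; omega
    · exact Nat.ne_of_lt (fP_mono_not_mem ha hb hab)
  rcases lt_or_gt_of_ne hne with hlt | hgt
  · exact key p q hlt h
  · exact key q p hgt h.symm

lemma fP_lt {P : Finset ℕ} {n p : ℕ} (hP : P ⊆ Finset.range n) (h0 : 0 ∈ P) (hp : p < n) :
    fP P p < n := by
  have hcard : P.card ≤ n := by simpa using Finset.card_le_card hP
  by_cases hmem : p ∈ P
  · have := fP_mem_lt hmem
    have : 1 ≤ P.card := Finset.card_pos.mpr ⟨0, h0⟩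
    omega
  · rw [fP, if_neg hmem]
    have hk : P.card = cntA P n := (cntA_eq_card hP).symm
    have h1 : cntA P n ≤ cntA P (p+1) + (n - (p+1)) := cntA_le_of_le P (by omega)
    rw [cntA_succ_not_mem hmem] at h1
    have h2 := cntA_le_self P p
    omega

section PvalLemmas

variable {n : ℕ} (π : Equiv.Perm (Fin n))

lemma pval_def {t : ℕ} (h1 : 1 ≤ t) (h2 : t ≤ n) :
    pval π t = (π ⟨t - 1, by omega⟩ : ℕ) + 1 := by
  rw [pval, dif_pos ⟨h1, by omega⟩]

lemma pval_succ_eq {p : ℕ} (hp : p < n) :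
    pval π (p + 1) = (π ⟨p, hp⟩ : ℕ) + 1 := by
  rw [pval_def π (by omega) (by omega)]
  simp

lemma pval_ge_one {t : ℕ} (h1 : 1 ≤ t) (h2 : t ≤ n) : 1 ≤ pval π t := by
  rw [pval_def π h1 h2]; omega

lemma pval_le {t : ℕ} (h1 : 1 ≤ t) (h2 : t ≤ n) : pval π t ≤ n := by
  rw [pval_def π h1 h2]
  have := (π ⟨t - 1, by omega⟩).isLt
  omega

lemma pval_inv_pval {p : ℕ} (h1 : 1 ≤ p) (h2 : p ≤ n) :
    pval π⁻¹ (pval π p) = p := by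
  rw [pval_def π h1 h2]
  set x := π ⟨p - 1, by omega⟩ with hx
  have hxlt : (x : ℕ) < n := x.isLt
  rw [pval_def π⁻¹ (by omega) (by omega)]
  have : (⟨(x : ℕ) + 1 - 1, by omega⟩ : Fin n) = x := by
    apply Fin.ext; simp
  rw [this, hx]
  simp
  omega

lemma pval_injOn {s t : ℕ} (hs1 : 1 ≤ s) (hs2 : s ≤ n) (ht1 : 1 ≤ t) (ht2 : t ≤ n)
    (h : pval π s = pval π t) : s = t := by
  have := pval_inv_pval π hs1 hs2
  have := pval_inv_pval π ht1 ht2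
  rw [h] at *
  omega

end PvalLemmas

section Construction

variable {n : ℕ} {P : Finset ℕ}

/-- run starts of a permutation: position `0` together with 0-based positions
starting a new increasing run -/
def runStarts {n : ℕ} (π : Equiv.Perm (Fin n)) : Finset ℕ :=
  (Finset.range n).filter (fun p => p = 0 ∨ pval π (p + 1) < pval π p)

lemma exists_permOf (hP : P ⊆ Finset.range n) (h0 : 0 ∈ P) :
    ∃ π : Equiv.Perm (Fin n), ∀ (p : ℕ) (hp : p < n), (π ⟨p, hp⟩ : ℕ) = fP P p := by
  have hinj : Function.Injective (fun x : Fin n => (⟨fP P x, fP_lt hP h0 x.isLt⟩ : Fin n)) := by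
    intro a b hab
    apply Fin.ext
    exact fP_inj (congrArg Fin.val hab)
  refine ⟨Equiv.ofBijective _ (Finite.injective_iff_bijective.mp hinj), fun p hp => rfl⟩

variable {π : Equiv.Perm (Fin n)}

lemma permOf_pval (hπ : ∀ (p : ℕ) (hp : p < n), (π ⟨p, hp⟩ : ℕ) = fP P p)
    {p : ℕ} (hp : p < n) : pval π (p + 1) = fP P p + 1 := by
  rw [pval_succ_eq π hp, hπ p hp]

lemma permOf_descent (hπ : ∀ (p : ℕ) (hp : p < n), (π ⟨p, hp⟩ : ℕ) = fP P p)
    {p : ℕ} (hp1 : 1 ≤ p) (hp2 : p < n) :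
    (pval π (p + 1) < pval π p ↔ p ∈ P) := by
  obtain ⟨p', rfl⟩ : ∃ p', p = p' + 1 := ⟨p - 1, by omega⟩
  rw [permOf_pval hπ hp2, show p' + 1 = p' + 1 from rfl,
    (by rw [permOf_pval hπ (by omega)] : pval π (p' + 1) = fP P p' + 1)]
  have hlt : fP P (p' + 1) < fP P p' ↔ p' + 1 ∈ P := by
    by_cases h1 : p' + 1 ∈ P <;> by_cases h2 : p' ∈ P
    · have e1 : fP P (p' + 1) = P.card - 1 - cntA P (p' + 1) := if_pos h1
      have e2 : fP P p' = P.card - 1 - cntA P p' := if_pos h2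
      have e3 := cntA_succ_mem h2
      have e4 := cntA_lt_card h1
      constructor
      · intro _; exact h1
      · intro _; omega
    · have := fP_mem_lt h1
      have := fP_not_mem_ge h2
      constructor
      · intro _; exact h1
      · intro _; omega
    · have := fP_mem_lt h2
      have := fP_not_mem_ge h1
      constructor
      · intro h; omega
      · intro h; exact absurd h h1
    · have := fP_mono_not_mem h2 h1 (Nat.lt_succ_self p')
      constructor
      · intro h; omega
      · intro h; exact absurd h h1
  constructor
  · intro h; exact hlt.mp (by omega)
  · intro h; have := hlt.mpr h; omega

lemma permOf_runStarts (hP : P ⊆ Finset.range n) (h0 : 0 ∈ P)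
    (hπ : ∀ (p : ℕ) (hp : p < n), (π ⟨p, hp⟩ : ℕ) = fP P p) :
    runStarts π = P := by
  ext p
  rw [runStarts, Finset.mem_filter, Finset.mem_range]
  constructor
  · rintro ⟨hp, rfl | hdes⟩
    · exact h0
    · have hp1 : 1 ≤ p := by
        by_contra h
        have : p = 0 := by omega
        subst this
        have h1 := pval_ge_one π (n := n) (t := 0+1) (by omega) (by omega)
        have h0' : pval π 0 = 0 := by rw [pval]; simp
        omega
      exact (permOf_descent hπ hp1 hp).mp hdes
  · intro hmem
    have hp : p < n := Finset.mem_range.mp (hP hmem)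
    refine ⟨hp, ?_⟩
    by_cases hz : p = 0
    · exact Or.inl hz
    · exact Or.inr ((permOf_descent hπ (by omega) hp).mpr hmem)

lemma permOf_key (hπ : ∀ (p : ℕ) (hp : p < n), (π ⟨p, hp⟩ : ℕ) = fP P p)
    (v : Fin n) : fP P ((π⁻¹ v : Fin n) : ℕ) = (v : ℕ) := by
  have h := hπ ((π⁻¹ v : Fin n) : ℕ) (π⁻¹ v).isLt
  have he : (⟨((π⁻¹ v : Fin n) : ℕ), (π⁻¹ v).isLt⟩ : Fin n) = π⁻¹ v := Fin.eta _ _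
  rw [he] at h
  simp at h
  simp only [Equiv.Perm.inv_def] at h ⊢
  omega

lemma permOf_low_anti (hπ : ∀ (p : ℕ) (hp : p < n), (π ⟨p, hp⟩ : ℕ) = fP P p)
    {u v : Fin n} (huv : (u : ℕ) < v) (hv : (v : ℕ) < P.card) :
    ((π⁻¹ v : Fin n) : ℕ) < ((π⁻¹ u : Fin n) : ℕ) := by
  have hku := permOf_key hπ u
  have hkv := permOf_key hπ v
  have hmu : ((π⁻¹ u : Fin n) : ℕ) ∈ P := by
    by_contra h
    have := fP_not_mem_ge h
    omega
  have hmv : ((π⁻¹ v : Fin n) : ℕ) ∈ P := by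
    by_contra h
    have := fP_not_mem_ge h
    omega
  by_contra h
  push_neg at h
  rcases Nat.lt_or_ge ((π⁻¹ u : Fin n) : ℕ) ((π⁻¹ v : Fin n) : ℕ) with h' | h'
  · have := fP_anti_mem hmu hmv h'
    omega
  · have : ((π⁻¹ u : Fin n) : ℕ) = ((π⁻¹ v : Fin n) : ℕ) := by omega
    rw [this] at hku
    omega

lemma permOf_high_mono (hπ : ∀ (p : ℕ) (hp : p < n), (π ⟨p, hp⟩ : ℕ) = fP P p)
    {u v : Fin n} (huv : (u : ℕ) < v) (hu : P.card ≤ (u : ℕ)) :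
    ((π⁻¹ u : Fin n) : ℕ) < ((π⁻¹ v : Fin n) : ℕ) := by
  have hku := permOf_key hπ u
  have hkv := permOf_key hπ v
  have hmu : ((π⁻¹ u : Fin n) : ℕ) ∉ P := by
    intro h
    have := fP_mem_lt h
    omega
  have hmv : ((π⁻¹ v : Fin n) : ℕ) ∉ P := by
    intro h
    have := fP_mem_lt h
    omega
  by_contra h
  push_neg at h
  rcases Nat.lt_or_ge ((π⁻¹ v : Fin n) : ℕ) ((π⁻¹ u : Fin n) : ℕ) with h' | h'
  · have := fP_mono_not_mem hmv hmu h'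
    omega
  · have : ((π⁻¹ u : Fin n) : ℕ) = ((π⁻¹ v : Fin n) : ℕ) := by omega
    rw [this] at hku
    omega

lemma permOf_ipk (hπ : ∀ (p : ℕ) (hp : p < n), (π ⟨p, hp⟩ : ℕ) = fP P p) :
    ipk π = 0 := by
  rw [ipk, pk, Finset.card_eq_zero, Finset.filter_eq_empty_iff]
  intro i hi
  rw [Finset.mem_Icc] at hi
  obtain ⟨hi2, hin⟩ := hi
  have hn3 : i + 1 ≤ n := by omega
  have ha : i - 1 - 1 < n := by omega
  have hb : i - 1 < n := by omega
  have hc : i + 1 - 1 < n := by omega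
  rintro ⟨hab, hcb⟩
  have e1 : pval π⁻¹ (i - 1) = ((π⁻¹ ⟨i - 1 - 1, ha⟩ : Fin n) : ℕ) + 1 :=
    pval_def π⁻¹ (by omega) (by omega)
  have e2 : pval π⁻¹ i = ((π⁻¹ ⟨i - 1, hb⟩ : Fin n) : ℕ) + 1 :=
    pval_def π⁻¹ (by omega) (by omega)
  have e3 : pval π⁻¹ (i + 1) = ((π⁻¹ ⟨i + 1 - 1, hc⟩ : Fin n) : ℕ) + 1 :=
    pval_def π⁻¹ (by omega) (by omega)
  rw [e1, e2] at hab
  rw [e3, e2] at hcb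
  rcases Nat.lt_or_ge (i - 1) P.card with hlow | hhigh
  · have := permOf_low_anti hπ (u := ⟨i - 1 - 1, ha⟩) (v := ⟨i - 1, hb⟩)
      (by simp; omega) (by simpa using hlow)
    omega
  · have := permOf_high_mono hπ (u := ⟨i - 1, hb⟩) (v := ⟨i + 1 - 1, hc⟩)
      (by simp; omega) (by simpa using hhigh)
    omega

end Construction

section Uniqueness

variable {n : ℕ} {π : Equiv.Perm (Fin n)}

lemma nopeak (h : ipk π = 0) :
    ∀ i, 2 ≤ i → i ≤ n - 1 →
      ¬(pval π⁻¹ (i - 1) < pval π⁻¹ i ∧ pval π⁻¹ (i + 1) < pval π⁻¹ i) := by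
  rw [ipk, pk, Finset.card_eq_zero, Finset.filter_eq_empty_iff] at h
  intro i h1 h2
  exact h (Finset.mem_Icc.mpr ⟨h1, h2⟩)

lemma qinj : ∀ u v, 1 ≤ u → u ≤ n → 1 ≤ v → v ≤ n →
    pval π⁻¹ u = pval π⁻¹ v → u = v :=
  fun u v hu1 hu2 hv1 hv2 h => pval_injOn π⁻¹ hu1 hu2 hv1 hv2 h

lemma q_v1 (hn : 1 ≤ n) : pval π⁻¹ (pval π 1) = 1 := pval_inv_pval π le_rfl hn

lemma stepH (hn : 1 ≤ n) (h : ipk π = 0) :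
    ∀ v, pval π 1 ≤ v → v < n → pval π⁻¹ v < pval π⁻¹ (v + 1) := by
  have hv1a : 1 ≤ pval π 1 := pval_ge_one π le_rfl hn
  intro v hv
  induction v, hv using Nat.le_induction with
  | base =>
      intro hvn
      have h1 : pval π⁻¹ (pval π 1) = 1 := q_v1 hn
      have h2 : 1 ≤ pval π⁻¹ (pval π 1 + 1) := pval_ge_one π⁻¹ (by omega) (by omega)
      have h3 : pval π⁻¹ (pval π 1 + 1) ≠ 1 := by
        intro he
        have := qinj (π := π) (pval π 1 + 1) (pval π 1) (by omega) (by omega) (by omega)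
          (by omega) (by rw [he, h1])
        omega
      omega
  | succ v hv ih =>
      intro hvn
      have hprev := ih (by omega)
      have hnp := nopeak h (v + 1) (by omega) (by omega)
      simp only [Nat.add_sub_cancel] at hnp
      have hne : pval π⁻¹ (v + 1 + 1) ≠ pval π⁻¹ (v + 1) := by
        intro he
        have := qinj (π := π) (v + 1 + 1) (v + 1) (by omega) (by omega) (by omega)
          (by omega) he
        omega
      have hnb : ¬(pval π⁻¹ (v + 1 + 1) < pval π⁻¹ (v + 1)) := fun hb => hnp ⟨hprev, hb⟩
      omega

lemma stepL (hn : 1 ≤ n) (h : ipk π = 0) :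
    ∀ d, 1 ≤ d → d + 1 ≤ pval π 1 →
      pval π⁻¹ (pval π 1 - d + 1) < pval π⁻¹ (pval π 1 - d) := by
  have hv1n : pval π 1 ≤ n := pval_le π le_rfl hn
  intro d
  induction d with
  | zero => omega
  | succ d ih =>
      intro _ hd
      by_cases hd0 : d = 0
      · subst hd0
        simp only [Nat.zero_add]
        have h1 : pval π⁻¹ (pval π 1) = 1 := q_v1 hn
        have e : pval π 1 - 1 + 1 = pval π 1 := by omega
        rw [e]
        have h2 : 1 ≤ pval π⁻¹ (pval π 1 - 1) := pval_ge_one π⁻¹ (by omega) (by omega)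
        have h3 : pval π⁻¹ (pval π 1 - 1) ≠ 1 := by
          intro he
          have := qinj (π := π) (pval π 1 - 1) (pval π 1) (by omega) (by omega) (by omega)
            (by omega) (by rw [he, h1])
          omega
        omega
      · have ihd := ih (by omega) (by omega)
        have hnp := nopeak h (pval π 1 - (d + 1) + 1) (by omega) (by omega)
        simp only [Nat.add_sub_cancel] at hnp
        have e1 : pval π 1 - (d + 1) + 1 = pval π 1 - d := by omega
        rw [e1] at hnp
        have hnb : ¬(pval π⁻¹ (pval π 1 - (d + 1)) < pval π⁻¹ (pval π 1 - d)) :=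
          fun hb => hnp ⟨hb, ihd⟩
        have hne : pval π⁻¹ (pval π 1 - (d + 1)) ≠ pval π⁻¹ (pval π 1 - d) := by
          intro he
          have := qinj (π := π) (pval π 1 - (d + 1)) (pval π 1 - d) (by omega) (by omega)
            (by omega) (by omega) he
          omega
        rw [e1]
        omega

lemma lowAnti (hn : 1 ≤ n) (h : ipk π = 0) :
    ∀ u v, 1 ≤ u → u < v → v ≤ pval π 1 → pval π⁻¹ v < pval π⁻¹ u := by
  intro u v hu huv hv
  have key : ∀ w, u + 1 ≤ w → w ≤ pval π 1 → pval π⁻¹ w < pval π⁻¹ u := by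
    intro w hw
    induction w, hw using Nat.le_induction with
    | base =>
        intro hwle
        have := stepL hn h (pval π 1 - u) (by omega) (by omega)
        rw [show pval π 1 - (pval π 1 - u) = u from by omega] at this
        exact this
    | succ w hw ih =>
        intro hwle
        have h1 := ih (by omega)
        have h2 := stepL hn h (pval π 1 - w) (by omega) (by omega)
        rw [show pval π 1 - (pval π 1 - w) = w from by omega] at h2
        omega
  exact key v huv hv

lemma highMono (hn : 1 ≤ n) (h : ipk π = 0) :
    ∀ u v, pval π 1 ≤ u → u < v → v ≤ n → pval π⁻¹ u < pval π⁻¹ v := by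
  intro u v hu huv hv
  have key : ∀ w, u + 1 ≤ w → w ≤ n → pval π⁻¹ u < pval π⁻¹ w := by
    intro w hw
    induction w, hw using Nat.le_induction with
    | base => intro hwle; exact stepH hn h u hu (by omega)
    | succ w hw ih =>
        intro hwle
        have h1 := ih (by omega)
        have h2 := stepH hn h w (by omega) (by omega)
        omega
  exact key v huv hv

lemma wdes (hn : 1 ≤ n) (h : ipk π = 0) :
    ∀ p, 1 ≤ p → p < n → (pval π (p + 1) < pval π p ↔ pval π (p + 1) ≤ pval π 1) := by
  intro p hp1 hpn
  have hu1 : 1 ≤ pval π p := pval_ge_one π (by omega) (by omega)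
  have hu2 : pval π p ≤ n := pval_le π (by omega) (by omega)
  have hv1 : 1 ≤ pval π (p + 1) := pval_ge_one π (by omega) (by omega)
  have hv2 : pval π (p + 1) ≤ n := pval_le π (by omega) (by omega)
  have hw1 : 1 ≤ pval π 1 := pval_ge_one π le_rfl hn
  have hw2 : pval π 1 ≤ n := pval_le π le_rfl hn
  have hqu : pval π⁻¹ (pval π p) = p := pval_inv_pval π (by omega) (by omega)
  have hqv : pval π⁻¹ (pval π (p + 1)) = p + 1 := pval_inv_pval π (by omega) (by omega)
  have hne : pval π p ≠ pval π (p + 1) := by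
    intro he
    have := pval_injOn π (s := p) (t := p + 1) (by omega) (by omega) (by omega) (by omega)
      (by rw [he])
    omega
  constructor
  · intro hdes
    by_contra hgt
    push_neg at hgt
    rcases le_or_gt (pval π p) (pval π 1) with hc | hc
    · omega
    · have := highMono hn h (pval π (p + 1)) (pval π p) (by omega) hdes hu2
      omega
  · intro hle
    rcases le_or_gt (pval π p) (pval π 1) with hc | hc
    · rcases lt_trichotomy (pval π p) (pval π (p + 1)) with h' | h' | h'
      · have := lowAnti hn h (pval π p) (pval π (p + 1)) (by omega) h' (by omega)
        omega
      · omega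
      · exact h'
    · omega

lemma runStarts_mem (hn : 1 ≤ n) (h : ipk π = 0) :
    ∀ p, p ∈ runStarts π ↔ p < n ∧ pval π (p + 1) ≤ pval π 1 := by
  intro p
  rw [runStarts, Finset.mem_filter, Finset.mem_range]
  constructor
  · rintro ⟨hp, hz | hdes⟩
    · subst hz
      exact ⟨hp, le_refl _⟩
    · by_cases hz : p = 0
      · subst hz; exact ⟨hp, le_refl _⟩
      · exact ⟨hp, (wdes hn h p (by omega) hp).mp hdes⟩
  · rintro ⟨hp, hle⟩
    refine ⟨hp, ?_⟩
    by_cases hz : p = 0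
    · exact Or.inl hz
    · exact Or.inr ((wdes hn h p (by omega) hp).mpr hle)

lemma runStarts_card (hn : 1 ≤ n) (h : ipk π = 0) :
    (runStarts π).card = pval π 1 := by
  rw [show pval π 1 = (Finset.Icc 1 (pval π 1)).card from by rw [Nat.card_Icc]; omega]
  apply Finset.card_bij (fun p _ => pval π (p + 1))
  · intro p hp
    rcases (runStarts_mem hn h p).mp hp with ⟨h1, h2⟩
    exact Finset.mem_Icc.mpr ⟨pval_ge_one π (by omega) (by omega), h2⟩
  · intro p hp p' hp' he
    have h1 := (runStarts_mem hn h p).mp hp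
    have h2 := (runStarts_mem hn h p').mp hp'
    have := pval_injOn π (s := p + 1) (t := p' + 1) (by omega) (by omega) (by omega)
      (by omega) he
    omega
  · intro v hv
    rcases Finset.mem_Icc.mp hv with ⟨hv1, hv2⟩
    have hvn : v ≤ n := le_trans hv2 (pval_le π le_rfl hn)
    have hq1 : 1 ≤ pval π⁻¹ v := pval_ge_one π⁻¹ hv1 hvn
    have hq2 : pval π⁻¹ v ≤ n := pval_le π⁻¹ hv1 hvn
    refine ⟨pval π⁻¹ v - 1, ?_, ?_⟩
    · have he : pval π (pval π⁻¹ v - 1 + 1) = v := by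
        rw [show pval π⁻¹ v - 1 + 1 = pval π⁻¹ v from by omega]
        have := pval_inv_pval π⁻¹ hv1 hvn
        rwa [inv_inv] at this
      exact (runStarts_mem hn h _).mpr ⟨by omega, by rw [he]; exact hv2⟩
    · rw [show pval π⁻¹ v - 1 + 1 = pval π⁻¹ v from by omega]
      have := pval_inv_pval π⁻¹ hv1 hvn
      rwa [inv_inv] at this

end Uniqueness

section Uniqueness2

variable {n : ℕ} {π : Equiv.Perm (Fin n)}

lemma cnt_low (hn : 1 ≤ n) (h : ipk π = 0) :
    ∀ p, p < n → pval π (p + 1) ≤ pval π 1 →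
      cntA (runStarts π) p = pval π 1 - pval π (p + 1) := by
  intro p hp hle
  have hv1 : 1 ≤ pval π (p + 1) := pval_ge_one π (by omega) (by omega)
  rw [cntA, show pval π 1 - pval π (p + 1)
      = (Finset.Ioc (pval π (p + 1)) (pval π 1)).card from by rw [Nat.card_Ioc]]
  apply Finset.card_bij (fun x _ => pval π (x + 1))
  · intro x hx
    rcases Finset.mem_filter.mp hx with ⟨hxr, hxp⟩
    rcases (runStarts_mem hn h x).mp hxr with ⟨hxn, hxle⟩
    refine Finset.mem_Ioc.mpr ⟨?_, hxle⟩
    have hb1 : 1 ≤ pval π (x + 1) := pval_ge_one π (by omega) (by omega)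
    rcases lt_trichotomy (pval π (x + 1)) (pval π (p + 1)) with h' | h' | h'
    · have := lowAnti hn h (pval π (x + 1)) (pval π (p + 1)) (by omega) h' (by omega)
      rw [pval_inv_pval π (by omega) (by omega),
        pval_inv_pval π (by omega) (by omega)] at this
      omega
    · have := pval_injOn π (s := x + 1) (t := p + 1) (by omega) (by omega) (by omega)
        (by omega) h'
      omega
    · exact h'
  · intro x hx x' hx' he
    rcases Finset.mem_filter.mp hx with ⟨hxr, hxp⟩
    rcases Finset.mem_filter.mp hx' with ⟨hxr', hxp'⟩
    have hxn := ((runStarts_mem hn h x).mp hxr).1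
    have hxn' := ((runStarts_mem hn h x').mp hxr').1
    have := pval_injOn π (s := x + 1) (t := x' + 1) (by omega) (by omega) (by omega)
      (by omega) he
    omega
  · intro u hu
    rcases Finset.mem_Ioc.mp hu with ⟨hu1, hu2⟩
    have hun : u ≤ n := le_trans hu2 (pval_le π le_rfl hn)
    have hq1 : 1 ≤ pval π⁻¹ u := pval_ge_one π⁻¹ (by omega) hun
    have hq2 : pval π⁻¹ u ≤ n := pval_le π⁻¹ (by omega) hun
    have hwq : pval π (pval π⁻¹ u - 1 + 1) = u := by
      rw [show pval π⁻¹ u - 1 + 1 = pval π⁻¹ u from by omega]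
      have := pval_inv_pval π⁻¹ (show 1 ≤ u by omega) hun
      rwa [inv_inv] at this
    have hqlt : pval π⁻¹ u < p + 1 := by
      have := lowAnti hn h (pval π (p + 1)) u hv1 hu1 hu2
      rwa [pval_inv_pval π (by omega) (by omega)] at this
    refine ⟨pval π⁻¹ u - 1, ?_, hwq⟩
    refine Finset.mem_filter.mpr ⟨(runStarts_mem hn h _).mpr
      ⟨by omega, by rw [hwq]; exact hu2⟩, ?_⟩
    show pval π⁻¹ u - 1 < p
    omega

lemma cnt_high (hn : 1 ≤ n) (h : ipk π = 0) :
    ∀ p, p < n → pval π 1 < pval π (p + 1) →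
      p - cntA (runStarts π) p = pval π (p + 1) - pval π 1 - 1 := by
  intro p hp hgt
  have hsplit : cntA (runStarts π) p
      + ((Finset.range p).filter (fun x => x ∉ runStarts π)).card = p := by
    have e : (runStarts π).filter (· < p)
        = (Finset.range p).filter (fun x => x ∈ runStarts π) := by
      ext x
      simp only [Finset.mem_filter, Finset.mem_range]
      tauto
    rw [cntA, e, Finset.card_filter_add_card_filter_not, Finset.card_range]
  have hcard2 : ((Finset.range p).filter (fun x => x ∉ runStarts π)).card
      = (Finset.Ioo (pval π 1) (pval π (p + 1))).card := by
    apply Finset.card_bij (fun x _ => pval π (x + 1))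
    · intro x hx
      rcases Finset.mem_filter.mp hx with ⟨hxp, hxm⟩
      rw [Finset.mem_range] at hxp
      have hxn : x < n := by omega
      have hgt' : pval π 1 < pval π (x + 1) := by
        by_contra hle
        push_neg at hle
        exact hxm ((runStarts_mem hn h x).mpr ⟨hxn, hle⟩)
      refine Finset.mem_Ioo.mpr ⟨hgt', ?_⟩
      rcases lt_trichotomy (pval π (x + 1)) (pval π (p + 1)) with h' | h' | h'
      · exact h'
      · have := pval_injOn π (s := x + 1) (t := p + 1) (by omega) (by omega) (by omega)
          (by omega) h'
        omega
      · have := highMono hn h (pval π (p + 1)) (pval π (x + 1)) (by omega) h'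
          (pval_le π (by omega) (by omega))
        rw [pval_inv_pval π (by omega) (by omega),
          pval_inv_pval π (by omega) (by omega)] at this
        omega
    · intro x hx x' hx' he
      rcases Finset.mem_filter.mp hx with ⟨hxp, _⟩
      rcases Finset.mem_filter.mp hx' with ⟨hxp', _⟩
      rw [Finset.mem_range] at hxp hxp'
      have := pval_injOn π (s := x + 1) (t := x' + 1) (by omega) (by omega) (by omega)
        (by omega) he
      omega
    · intro u hu
      rcases Finset.mem_Ioo.mp hu with ⟨hu1, hu2⟩
      have hun : u ≤ n := by
        have := pval_le π (show 1 ≤ p + 1 by omega) (by omega)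
        omega
      have h1u : 1 ≤ u := by
        have := pval_ge_one π le_rfl hn
        omega
      have hq1 : 1 ≤ pval π⁻¹ u := pval_ge_one π⁻¹ h1u hun
      have hq2 : pval π⁻¹ u ≤ n := pval_le π⁻¹ h1u hun
      have hwq : pval π (pval π⁻¹ u - 1 + 1) = u := by
        rw [show pval π⁻¹ u - 1 + 1 = pval π⁻¹ u from by omega]
        have := pval_inv_pval π⁻¹ h1u hun
        rwa [inv_inv] at this
      have hqlt : pval π⁻¹ u < p + 1 := by
        have := highMono hn h u (pval π (p + 1)) (by omega) hu2
          (pval_le π (by omega) (by omega))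
        rwa [pval_inv_pval π (by omega) (by omega)] at this
      refine ⟨pval π⁻¹ u - 1, Finset.mem_filter.mpr
        ⟨Finset.mem_range.mpr (by omega), ?_⟩, hwq⟩
      intro hmem
      rcases (runStarts_mem hn h _).mp hmem with ⟨_, hle⟩
      rw [hwq] at hle
      omega
  rw [Nat.card_Ioo] at hcard2
  omega

lemma ipk_formula (hn : 1 ≤ n) (h : ipk π = 0) :
    ∀ (p : ℕ) (hp : p < n), (π ⟨p, hp⟩ : ℕ) = fP (runStarts π) p := by
  intro p hp
  have he : pval π (p + 1) = (π ⟨p, hp⟩ : ℕ) + 1 := pval_succ_eq π hp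
  have hv1 : 1 ≤ pval π (p + 1) := pval_ge_one π (by omega) (by omega)
  rcases le_or_gt (pval π (p + 1)) (pval π 1) with hle | hgt
  · have hmem : p ∈ runStarts π := (runStarts_mem hn h p).mpr ⟨hp, hle⟩
    rw [fP, if_pos hmem, runStarts_card hn h, cnt_low hn h p hp hle]
    omega
  · have hmem : p ∉ runStarts π := by
      intro hm
      rcases (runStarts_mem hn h p).mp hm with ⟨_, hle⟩
      omega
    have h2 := cnt_high hn h p hp hgt
    have h3 := cntA_le_self (runStarts π) p
    rw [fP, if_neg hmem, runStarts_card hn h, cnt_high hn h p hp hgt]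
    omega

end Uniqueness2

section Counting

/-- valid run-start sets: contain `0`, and every window of `k` consecutive
positions starting at `a ∈ [1, n-k]` meets the set -/
def validSet (k n : ℕ) : Finset (Finset ℕ) :=
  (Finset.range n).powerset.filter
    (fun P => (0 ∈ P ∨ n = 0) ∧
      ∀ a ∈ Finset.Icc 1 n, a + k ≤ n → ∃ j ∈ Finset.range k, a + j ∈ P)

lemma mem_validSet {k n : ℕ} {P : Finset ℕ} :
    P ∈ validSet k n ↔ P ⊆ Finset.range n ∧ ((0 ∈ P ∨ n = 0) ∧
      ∀ a ∈ Finset.Icc 1 n, a + k ≤ n → ∃ j ∈ Finset.range k, a + j ∈ P) := by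
  unfold validSet
  rw [Finset.mem_filter, Finset.mem_powerset]

lemma sup_le_of_mem_validSet {k n : ℕ} {P : Finset ℕ} (h : P ∈ validSet k (n + 1)) :
    P.sup id ≤ n := by
  rw [mem_validSet] at h
  apply Finset.sup_le
  intro b hb
  have hbb := Finset.mem_range.mp (h.1 hb)
  simp only [id_eq]
  omega

lemma zero_mem_of_mem_validSet {k n : ℕ} {P : Finset ℕ} (h : P ∈ validSet k (n + 1)) :
    0 ∈ P := by
  rw [mem_validSet] at h
  exact h.2.1.resolve_right (by omega)

lemma sup_gap_of_mem_validSet {k n : ℕ} (hk : 1 ≤ k) {P : Finset ℕ}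
    (h : P ∈ validSet k (n + 1)) : n - P.sup id < k := by
  have hsup_le := sup_le_of_mem_validSet h
  rw [mem_validSet] at h
  obtain ⟨hsub, _, hgap⟩ := h
  by_contra hc
  push_neg at hc
  have hc' : P.sup id + 1 + k ≤ n + 1 := by omega
  obtain ⟨j, hj, hmem⟩ := hgap (P.sup id + 1)
    (Finset.mem_Icc.mpr ⟨by omega, by omega⟩) hc'
  have hle : id (P.sup id + 1 + j) ≤ P.sup id := Finset.le_sup hmem
  simp only [id_eq] at hle
  omega

lemma validSet_zero (k : ℕ) : validSet k 0 = {∅} := by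
  apply Finset.ext
  intro P
  rw [Finset.mem_singleton, mem_validSet]
  constructor
  · intro hP
    have h1 := hP.1
    rw [Finset.range_zero, Finset.subset_empty] at h1
    exact h1
  · rintro rfl
    refine ⟨by simp, Or.inr rfl, ?_⟩
    intro a ha hak
    rw [Finset.mem_Icc] at ha
    omega

lemma validSet_card (k : ℕ) (hk : 1 ≤ k) : ∀ n, (validSet k n).card = kfib k n := by
  intro n
  induction n using Nat.strong_induction_on with
  | _ n ih =>
    match n with
    | 0 =>
        rw [validSet_zero]
        simp [kfib]
    | Nat.succ n =>
        have hfib : ∀ P ∈ validSet k (n + 1), n - P.sup id ∈ Finset.range k :=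
          fun P hP => Finset.mem_range.mpr (sup_gap_of_mem_validSet hk hP)
        rw [Finset.card_eq_sum_card_fiberwise hfib]
        rw [kfib]
        apply Finset.sum_congr rfl
        intro l hl
        rw [Finset.mem_range] at hl
        split_ifs with hln
        · rw [← ih (n - l) (by omega)]
          refine Finset.card_bij' (fun P _ => P.erase (n - l))
            (fun Q _ => insert (n - l) Q) ?hi ?hj ?hleft ?hright
          case hi =>
            intro P hP
            rw [Finset.mem_filter] at hP
            obtain ⟨hPv, hsupP⟩ := hP
            have h0 := zero_mem_of_mem_validSet hPv
            have hsup_le := sup_le_of_mem_validSet hPv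
            have hsupM : P.sup id = n - l := by omega
            rw [mem_validSet] at hPv
            obtain ⟨hsub, h0or, hgap⟩ := hPv
            rw [mem_validSet]
            refine ⟨?_, ?_, ?_⟩
            · intro x hx
              rw [Finset.mem_erase] at hx
              have hxle : id x ≤ P.sup id := Finset.le_sup (f := id) hx.2
              simp only [id_eq] at hxle
              rw [Finset.mem_range]
              omega
            · by_cases hM : n - l = 0
              · exact Or.inr hM
              · exact Or.inl (Finset.mem_erase.mpr ⟨by omega, h0⟩)
            · intro a ha hak
              rw [Finset.mem_Icc] at ha
              obtain ⟨j, hj, hmem⟩ := hgap a (Finset.mem_Icc.mpr ⟨ha.1, by omega⟩)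
                (by omega)
              rw [Finset.mem_range] at hj
              exact ⟨j, Finset.mem_range.mpr hj, Finset.mem_erase.mpr ⟨by omega, hmem⟩⟩
          case hj =>
            intro Q hQ
            rw [mem_validSet] at hQ
            obtain ⟨hsub, h0or, hgap⟩ := hQ
            have hQlt : ∀ x ∈ Q, x < n - l := fun x hx => Finset.mem_range.mp (hsub hx)
            have hsup : (insert (n - l) Q).sup id = n - l := by
              rw [Finset.sup_insert]
              have hQs : Q.sup id ≤ n - l := by
                apply Finset.sup_le
                intro b hb
                have := hQlt b hb
                simp only [id_eq]
                omega
              simpa using hQs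
            rw [Finset.mem_filter]
            refine ⟨?_, by rw [hsup]; omega⟩
            rw [mem_validSet]
            refine ⟨?_, ?_, ?_⟩
            · intro x hx
              rw [Finset.mem_insert] at hx
              rw [Finset.mem_range]
              rcases hx with rfl | hx
              · omega
              · have := hQlt x hx
                omega
            · rcases h0or with h | h
              · exact Or.inl (Finset.mem_insert_of_mem h)
              · exact Or.inl (by rw [← h]; exact Finset.mem_insert_self _ _)
            · intro a ha hak
              rw [Finset.mem_Icc] at ha
              rcases le_or_gt (a + k) (n - l) with hc | hc
              · obtain ⟨j, hj, hmem⟩ := hgap a (Finset.mem_Icc.mpr ⟨ha.1, by omega⟩) hc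
                exact ⟨j, hj, Finset.mem_insert_of_mem hmem⟩
              · rcases le_or_gt a (n - l) with hc2 | hc2
                · refine ⟨n - l - a, Finset.mem_range.mpr (by omega), ?_⟩
                  rw [show a + (n - l - a) = n - l from by omega]
                  exact Finset.mem_insert_self _ _
                · omega
          case hleft =>
            intro P hP
            rw [Finset.mem_filter] at hP
            obtain ⟨hPv, hsupP⟩ := hP
            have h0 := zero_mem_of_mem_validSet hPv
            have hsup_le := sup_le_of_mem_validSet hPv
            have hsupM : P.sup id = n - l := by omega
            have hmem : n - l ∈ P := by
              obtain ⟨b, hb, hbe⟩ := Finset.exists_mem_eq_sup P ⟨0, h0⟩ id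
              simp only [id_eq] at hbe
              rw [hsupM] at hbe
              rw [hbe]
              exact hb
            exact Finset.insert_erase hmem
          case hright =>
            intro Q hQ
            rw [mem_validSet] at hQ
            have hnm : n - l ∉ Q := by
              intro hc
              have := Finset.mem_range.mp (hQ.1 hc)
              omega
            exact Finset.erase_insert hnm
        · rw [Finset.card_eq_zero, Finset.filter_eq_empty_iff]
          intro P hP
          have := sup_le_of_mem_validSet hP
          omega
  termination_by n => n

end Counting


end Stmt15

open Stmt15


/-- For `n ≥ 1` and `m ≥ 3`, the number of permutations in `S_n`
avoiding `12⋯m` as a consecutive pattern with `ipk(π) = 0` equals the order-`(m−1)`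
Fibonacci number `f_n^{(m-1)}`. -/
theorem count_avoidsInc_ipk_zero {n m : ℕ} (hn : 1 ≤ n) (hm : 3 ≤ m) :
    Nat.card { π : Equiv.Perm (Fin n) // AvoidsInc m π ∧ ipk π = 0 } =
      kfib (m - 1) n := by
  classical
  have hk : 1 ≤ m - 1 := by omega
  have h1 : Nat.card { π : Equiv.Perm (Fin n) // AvoidsInc m π ∧ ipk π = 0 }
      = (Finset.univ.filter
          (fun π : Equiv.Perm (Fin n) => AvoidsInc m π ∧ ipk π = 0)).card := by
    rw [Nat.card_eq_fintype_card, Fintype.card_subtype]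
  rw [h1, ← validSet_card (m - 1) hk n]
  apply Finset.card_bij (fun π _ => runStarts π)
  · intro π hπ
    rw [Finset.mem_filter] at hπ
    obtain ⟨-, hav, hipk⟩ := hπ
    rw [mem_validSet]
    refine ⟨?_, Or.inl ?_, ?_⟩
    · intro x hx
      exact (Finset.mem_filter.mp hx).1
    · rw [runStarts, Finset.mem_filter]
      exact ⟨Finset.mem_range.mpr hn, Or.inl rfl⟩
    · intro a ha hak
      rw [Finset.mem_Icc] at ha
      have hna := hav a ha.1 (by omega)
      push_neg at hna
      obtain ⟨j, hj, hge⟩ := hna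
      have hb1 : 1 ≤ a + j := by omega
      have hb2 : a + j + 1 ≤ n := by omega
      have hne : pval π (a + j) ≠ pval π (a + j + 1) := by
        intro he
        have := pval_injOn π (s := a + j) (t := a + j + 1) (by omega) (by omega)
          (by omega) (by omega) he
        omega
      have hdes : pval π (a + j + 1) < pval π (a + j) := by omega
      refine ⟨j, Finset.mem_range.mpr (by omega), ?_⟩
      rw [runStarts, Finset.mem_filter]
      exact ⟨Finset.mem_range.mpr (by omega), Or.inr hdes⟩
  · intro π hπ π' hπ' he
    rw [Finset.mem_filter] at hπ hπ'
    have f1 := ipk_formula hn hπ.2.2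
    have f2 := ipk_formula hn hπ'.2.2
    apply Equiv.ext
    intro x
    have e1 := f1 x.1 x.2
    have e2 := f2 x.1 x.2
    rw [he] at e1
    simp only [Fin.eta] at e1 e2
    exact Fin.ext (by omega)
  · intro P hP
    have hPm := mem_validSet.mp hP
    have hsub : P ⊆ Finset.range n := hPm.1
    have h0 : 0 ∈ P := hPm.2.1.resolve_right (by omega)
    have hgap := hPm.2.2
    obtain ⟨π, hπ⟩ := exists_permOf hsub h0
    have hrs : runStarts π = P := permOf_runStarts hsub h0 hπ
    have hipk : ipk π = 0 := permOf_ipk hπ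
    have hav : AvoidsInc m π := by
      intro i hi1 hi2 hall
      obtain ⟨j, hj, hmem⟩ := hgap i (Finset.mem_Icc.mpr ⟨hi1, by omega⟩) (by omega)
      rw [Finset.mem_range] at hj
      have hdes := (permOf_descent hπ (p := i + j) (by omega) (by omega)).mpr hmem
      have hasc := hall j (by omega)
      omega
    exact ⟨π, Finset.mem_filter.mpr ⟨Finset.mem_univ _, hav, hipk⟩, hrs⟩
end

section
/- The identity Σ_{i=1}^{n-1} Σ_{j=1}^{i} f_{j-1} f_j = f_{n-1} f_n − ⌊(n+1)/2⌋ holds for all n ≥ 1, where f_k are the Fibonacci numbers with f_0 = f_1 = 1. -/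
/-!
By Cassini's identity `f k * f (k + 2) - f (k + 1) ^ 2 = (-1) ^ k`, the inner sum
`∑_{j=1}^{i} f (j-1) * f j` equals `f i ^ 2`, less one when `i` is even. Since
`f i ^ 2 = f i * f (i + 1) - f (i - 1) * f i`, the squares telescope, so the outer sum is
`f (n-1) * f n - 1 - ⌊(n-1)/2⌋ = f (n-1) * f n - ⌊(n+1)/2⌋`.
-/

/-- The Fibonacci numbers with `f 0 = f 1 = 1` and `f n = f (n-1) + f (n-2)`. -/
def fib1 (k : ℕ) : ℕ := Nat.fib (k + 1)

open Finset

lemma fib1_add_two (k : ℕ) : fib1 (k + 2) = fib1 k + fib1 (k + 1) :=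
  Nat.fib_add_two

lemma fib1_mul_fib1_add_two_sub_sq (k : ℕ) :
    (fib1 k * fib1 (k + 2) : ℤ) - fib1 (k + 1) ^ 2 = (-1) ^ k := by
  have h := Int.fib_succ_mul_fib_pred_sub_fib_sq (k + 2 : ℕ)
  rw [Int.natAbs_natCast, pow_add, neg_one_sq, mul_one] at h
  rw [← h, mul_comm]
  simp only [fib1, ← Int.fib_natCast]
  push_cast
  ring_nf

lemma fib1_succ_sq_add_mod_two (k : ℕ) :
    fib1 (k + 1) ^ 2 + (k + 1) % 2 = fib1 k * fib1 (k + 2) + k % 2 := by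
  have h := fib1_mul_fib1_add_two_sub_sq k
  zify
  rcases Nat.even_or_odd k with hk | hk
  · rw [hk.neg_one_pow] at h
    have := Nat.even_iff.mp hk
    omega
  · rw [hk.neg_one_pow] at h
    have := Nat.odd_iff.mp hk
    omega

lemma sum_fib1_pred_mul_fib1_add_mod_two (i : ℕ) :
    ∑ j ∈ Icc 1 i, fib1 (j - 1) * fib1 j + (i + 1) % 2 = fib1 i ^ 2 := by
  induction i with
  | zero => rfl
  | succ i ih =>
    rw [sum_Icc_succ_top (by omega), Nat.add_sub_cancel,
      show (i + 1 + 1) % 2 = i % 2 by omega]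
    have hc := fib1_succ_sq_add_mod_two i
    rw [fib1_add_two] at hc
    nlinarith

lemma sum_fib1_sq (m : ℕ) : ∑ i ∈ Icc 0 m, fib1 i ^ 2 = fib1 m * fib1 (m + 1) := by
  induction m with
  | zero => rfl
  | succ m ih => rw [sum_Icc_succ_top (by omega), ih, fib1_add_two]; ring

lemma sum_Icc_one_succ_mod_two (m : ℕ) : ∑ i ∈ Icc 1 m, (i + 1) % 2 = m / 2 := by
  induction m with
  | zero => rfl
  | succ m ih => rw [sum_Icc_succ_top (by omega), ih]; omega

/-- For all `n ≥ 1`,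
`Σ_{i=1}^{n-1} Σ_{j=1}^{i} f_{j-1} f_j = f_{n-1} f_n − ⌊(n+1)/2⌋`, where `f` is the
Fibonacci sequence with `f_0 = f_1 = 1`. -/
theorem fib_sum_identity {n : ℕ} (hn : 1 ≤ n) :
    (∑ i ∈ Finset.Icc 1 (n - 1), ∑ j ∈ Finset.Icc 1 i, fib1 (j - 1) * fib1 j) =
      fib1 (n - 1) * fib1 n - (n + 1) / 2 := by
  obtain ⟨m, rfl⟩ := Nat.exists_eq_add_of_le' hn
  have h_inner : ∑ i ∈ Icc 1 m, ∑ j ∈ Icc 1 i, fib1 (j - 1) * fib1 j + m / 2 =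
      ∑ i ∈ Icc 1 m, fib1 i ^ 2 := by
    rw [← sum_Icc_one_succ_mod_two, ← sum_add_distrib]
    exact sum_congr rfl fun i _ => sum_fib1_pred_mul_fib1_add_mod_two i
  have h_squares : 1 + ∑ i ∈ Icc 1 m, fib1 i ^ 2 = fib1 m * fib1 (m + 1) := by
    rw [← sum_fib1_sq, Icc_eq_cons_Ioc (Nat.zero_le m), sum_cons, ← Icc_add_one_left_eq_Ioc]
    rfl
  rw [Nat.add_sub_cancel]
  omega
end

section
/- For all m ≥ 2, the generating function for 12⋯m-clusters counted by length (x) and number of marked occurrences (s) is given by Σ_{k=2}^∞ Σ_{π ∈ S_k} Σ_{c ∈ C_{12⋯m, π}} s^{mk(c)} x^k = s x^m / (1 − s Σ_{l=1}^{m-1} x^l) as formal power series in s and x. -/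
/-- `IsCluster σ π T` says that the marked permutation `(π, T)` (where `T` is a set of
0-based starting positions of marked occurrences of `σ` in `π`) is a cluster: it has at
least one mark, every mark is an occurrence of `σ`, and it is not the concatenation of
two nonempty marked permutations — equivalently, every possible cut point `0 < p < n`
is strictly crossed by some marked occurrence (so the marked occurrences cover all
positions and consecutive marked occurrences overlap). -/
def IsCluster {n m : ℕ} (σ : Equiv.Perm (Fin m)) (π : Equiv.Perm (Fin n))
    (T : Finset ℕ) : Prop :=
  T.Nonempty ∧ (∀ i ∈ T, IsOcc σ π i) ∧
    ∀ p : ℕ, 0 < p → p < n → ∃ i ∈ T, i < p ∧ p < i + m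

/-- The number of clusters `(π, T)` with respect to the monotone pattern `12⋯m`
(the identity of `S_m`) with underlying permutation `π ∈ S_k` and exactly `j` marked
occurrences. -/
noncomputable def clusterCount (m j k : ℕ) : ℕ :=
  Nat.card { c : Equiv.Perm (Fin k) × Finset ℕ //
    IsCluster (1 : Equiv.Perm (Fin m)) c.1 c.2 ∧ c.2.card = j }

/-- Explicit condition on mark sets. -/
def Cond (m k : ℕ) (T : Finset ℕ) : Prop :=
  m ≤ k ∧ 0 ∈ T ∧ (k - m) ∈ T ∧ (∀ i ∈ T, i ≤ k - m) ∧
    ∀ i ∈ T, i < k - m → ∃ i' ∈ T, i < i' ∧ i' < i + m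

lemma isOcc_one_one {m n : ℕ} (i : ℕ) :
    IsOcc (1 : Equiv.Perm (Fin m)) (1 : Equiv.Perm (Fin n)) i ↔ i + m ≤ n := by
  constructor
  · rintro ⟨h, -⟩; exact h
  · intro h
    refine ⟨h, fun s t => ?_⟩
    simp only [Equiv.Perm.coe_one, id_eq, Fin.lt_def]
    omega

lemma perm_eq_one {m k : ℕ} {π : Equiv.Perm (Fin k)} {T : Finset ℕ}
    (hc : IsCluster (1 : Equiv.Perm (Fin m)) π T) : π = 1 := by
  obtain ⟨hne, hocc, hcov⟩ := hc
  have step : ∀ x : ℕ, ∀ hx : x + 1 < k, π ⟨x, by omega⟩ < π ⟨x + 1, hx⟩ := by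
    intro x hx
    obtain ⟨q, hqT, hq1, hq2⟩ := hcov (x + 1) (by omega) hx
    obtain ⟨hqm, hiso⟩ := hocc q hqT
    have hs : x - q < m := by omega
    have ht : x + 1 - q < m := by omega
    have h1 := (hiso ⟨x - q, hs⟩ ⟨x + 1 - q, ht⟩).mp
      (by simp only [Equiv.Perm.coe_one, id_eq, Fin.lt_def]; omega)
    have e1 : (⟨q + (⟨x - q, hs⟩ : Fin m).val, by omega⟩ : Fin k) = ⟨x, by omega⟩ :=
      Fin.ext (by simp; omega)
    have e2 : (⟨q + (⟨x + 1 - q, ht⟩ : Fin m).val, by omega⟩ : Fin k) = ⟨x + 1, hx⟩ :=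
      Fin.ext (by simp; omega)
    rwa [e1, e2] at h1
  have key : ∀ d : ℕ, ∀ a b : Fin k, b.val = a.val + d + 1 → π a < π b := by
    intro d
    induction d with
    | zero =>
      intro a b hb
      have h1 := step a.val (by omega)
      have e1 : (⟨a.val, by omega⟩ : Fin k) = a := Fin.ext rfl
      have e2 : (⟨a.val + 1, by omega⟩ : Fin k) = b := Fin.ext (by simp; omega)
      rwa [e1, e2] at h1
    | succ d ih =>
      intro a b hb
      have hmidlt : a.val + d + 1 < k := by omega
      have h1 := ih a ⟨a.val + d + 1, hmidlt⟩ rfl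
      have h2 := step (a.val + d + 1) (by omega)
      have e2 : (⟨a.val + d + 1 + 1, by omega⟩ : Fin k) = b := Fin.ext (by simp; omega)
      rw [e2] at h2
      exact h1.trans h2
  have hsm : StrictMono ⇑π := fun a b hab => key (b.val - a.val - 1) a b (by
    have := (Fin.lt_def).mp hab; omega)
  have hsm1 : StrictMono ⇑(1 : Equiv.Perm (Fin k)) := by
    simp only [Equiv.Perm.coe_one]; exact strictMono_id
  haveI : WellFoundedLT (Fin k) := Finite.to_wellFoundedLT
  have h2 : ⇑π = ⇑(1 : Equiv.Perm (Fin k)) :=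
    (hsm.range_inj hsm1).1 (by rw [Equiv.range_eq_univ, Equiv.range_eq_univ])
  exact Equiv.coe_fn_injective h2

lemma cluster_iff_cond {m k : ℕ} (hm : 2 ≤ m) (T : Finset ℕ) :
    IsCluster (1 : Equiv.Perm (Fin m)) (1 : Equiv.Perm (Fin k)) T ↔ Cond m k T := by
  constructor
  · rintro ⟨hne, hocc, hcov⟩
    have hvalid : ∀ i ∈ T, i + m ≤ k := fun i hi => (isOcc_one_one i).mp (hocc i hi)
    obtain ⟨i₀, hi₀⟩ := hne
    have hmk : m ≤ k := by have := hvalid i₀ hi₀; omega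
    have h0 : 0 ∈ T := by
      obtain ⟨i, hiT, hi1, -⟩ := hcov 1 (by omega) (by omega)
      have : i = 0 := by omega
      rwa [this] at hiT
    have hkm : k - m ∈ T := by
      obtain ⟨i, hiT, hi1, hi2⟩ := hcov (k - 1) (by omega) (by omega)
      have := hvalid i hiT
      have : i = k - m := by omega
      rwa [this] at hiT
    refine ⟨hmk, h0, hkm, fun i hi => by have := hvalid i hi; omega, ?_⟩
    intro i hiT hilt
    obtain ⟨q, hqT, hq1, hq2⟩ := hcov (i + m) (by omega) (by omega)
    exact ⟨q, hqT, by omega, by omega⟩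
  · rintro ⟨hmk, h0, hkm, hbd, hgap⟩
    refine ⟨⟨0, h0⟩, fun i hi => (isOcc_one_one i).mpr (by have := hbd i hi; omega), ?_⟩
    intro p hp0 hpk
    classical
    set s := T.filter (fun i => i < p) with hs_def
    have hs : s.Nonempty := ⟨0, Finset.mem_filter.mpr ⟨h0, hp0⟩⟩
    set i₀ := s.max' hs with hi₀_def
    have hi₀s : i₀ ∈ s := s.max'_mem hs
    have hi₀T : i₀ ∈ T := (Finset.mem_filter.mp hi₀s).1
    have hi₀p : i₀ < p := (Finset.mem_filter.mp hi₀s).2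
    by_cases h : i₀ = k - m
    · exact ⟨i₀, hi₀T, hi₀p, by omega⟩
    · have hlt : i₀ < k - m := lt_of_le_of_ne (hbd _ hi₀T) h
      obtain ⟨i', hi'T, h1, h2⟩ := hgap i₀ hi₀T hlt
      have hnp : ¬ i' < p := fun hlt' =>
        absurd (s.le_max' i' (Finset.mem_filter.mpr ⟨hi'T, hlt'⟩)) (by omega)
      exact ⟨i₀, hi₀T, hi₀p, by omega⟩

open Finset in
/-- The finset of mark sets of clusters. -/
noncomputable def markSets (m j k : ℕ) : Finset (Finset ℕ) :=
  @Finset.filter _ (fun T => Cond m k T ∧ T.card = j) (fun _ => Classical.propDecidable _)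
    ((Finset.range (k + 1)).powerset)

lemma mem_markSets {m j k : ℕ} {T : Finset ℕ} :
    T ∈ markSets m j k ↔ Cond m k T ∧ T.card = j := by
  classical
  rw [markSets, Finset.filter_congr_decidable, Finset.mem_filter, Finset.mem_powerset]
  constructor
  · rintro ⟨-, h⟩; exact h
  · intro h
    refine ⟨fun i hi => Finset.mem_range.mpr ?_, h⟩
    have := h.1.2.2.2.1 i hi
    omega

lemma clusterCount_eq {m j k : ℕ} (hm : 2 ≤ m) :
    clusterCount m j k = (markSets m j k).card := by
  rw [clusterCount, ← Nat.card_eq_finsetCard]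
  refine Nat.card_congr ?_
  refine
    { toFun := fun c => ⟨c.1.2, ?_⟩
      invFun := fun T => ⟨(1, T.1), ?_⟩
      left_inv := ?_
      right_inv := ?_ }
  · have hπ : c.1.1 = 1 := perm_eq_one c.2.1
    have hc := c.2.1
    rw [hπ] at hc
    exact mem_markSets.mpr ⟨(cluster_iff_cond hm _).mp hc, c.2.2⟩
  · have h := mem_markSets.mp T.2
    exact ⟨(cluster_iff_cond hm _).mpr h.1, h.2⟩
  · intro c
    have hπ : c.1.1 = 1 := perm_eq_one c.2.1
    exact Subtype.ext (Prod.ext hπ.symm rfl)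
  · intro T
    rfl

lemma markSets_zero {m k : ℕ} : (markSets m 0 k).card = 0 := by
  rw [Finset.card_eq_zero, Finset.eq_empty_iff_forall_notMem]
  intro T hT
  obtain ⟨⟨-, h0, -⟩, hcard⟩ := mem_markSets.mp hT
  rw [Finset.card_eq_zero.mp hcard] at h0
  exact absurd h0 (Finset.notMem_empty 0)

lemma markSets_small {m j k : ℕ} (h : k < m) : (markSets m j k).card = 0 := by
  rw [Finset.card_eq_zero, Finset.eq_empty_iff_forall_notMem]
  intro T hT
  obtain ⟨⟨hmk, -⟩, -⟩ := mem_markSets.mp hT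
  omega

lemma markSets_one {m k : ℕ} (hm : 2 ≤ m) :
    (markSets m 1 k).card = if k = m then 1 else 0 := by
  split_ifs with h
  · subst h
    have : markSets k 1 k = {({0} : Finset ℕ)} := by
      ext T
      rw [mem_markSets, Finset.mem_singleton]
      constructor
      · rintro ⟨⟨hmk, h0, hkm, hbd, hgap⟩, hcard⟩
        obtain ⟨t, ht⟩ := Finset.card_eq_one.mp hcard
        subst ht
        have : t = 0 := (Finset.mem_singleton.mp h0).symm
        rw [this]
      · rintro rfl
        refine ⟨⟨le_rfl, Finset.mem_singleton_self 0, by simpa using Finset.mem_singleton_self 0,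
          ?_, ?_⟩, rfl⟩
        · intro i hi; rw [Finset.mem_singleton.mp hi]; omega
        · intro i hi hlt
          rw [Finset.mem_singleton.mp hi] at hlt
          omega
    rw [this, Finset.card_singleton]
  · rw [Finset.card_eq_zero, Finset.eq_empty_iff_forall_notMem]
    intro T hT
    obtain ⟨⟨hmk, h0, hkm, hbd, -⟩, hcard⟩ := mem_markSets.mp hT
    obtain ⟨t, ht⟩ := Finset.card_eq_one.mp hcard
    subst ht
    have h1 : t = 0 := (Finset.mem_singleton.mp h0).symm
    have h2 : t = k - m := (Finset.mem_singleton.mp hkm).symm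
    omega

lemma markSets_rec {m : ℕ} (hm : 2 ≤ m) (j k : ℕ) :
    (markSets m (j + 2) k).card = ∑ l ∈ Finset.Icc 1 (m - 1), (markSets m (j + 1) (k - l)).card := by
  classical
  set f : Finset ℕ → ℕ := fun T => (k - m) - (T.erase (k - m)).sup id with hf_def
  -- basic facts about any `T ∈ markSets m (j+2) k`
  have hfacts : ∀ T ∈ markSets m (j + 2) k,
      (k - m) - (T.erase (k - m)).sup id ∈ Finset.Icc 1 (m - 1) ∧
      ((T.erase (k - m)).sup id ∈ T.erase (k - m) ∧ ∀ i ∈ T.erase (k - m), i ≤ (T.erase (k - m)).sup id) := by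
    intro T hT
    obtain ⟨⟨hmk, h0, hkm, hbd, hgap⟩, hcard⟩ := mem_markSets.mp hT
    have hkmpos : 0 < k - m := by
      by_contra h
      have hsub : T ⊆ {0} := fun i hi => Finset.mem_singleton.mpr (by have := hbd i hi; omega)
      have := Finset.card_le_card hsub
      simp at this
      omega
    set E := T.erase (k - m) with hE_def
    have hE : E.Nonempty := ⟨0, Finset.mem_erase.mpr ⟨by omega, h0⟩⟩
    have hmax : E.sup id = E.max' hE := (Finset.sup'_eq_sup hE id).symm
    have ht0mem : E.sup id ∈ E := hmax ▸ E.max'_mem hE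
    have hub : ∀ i ∈ E, i ≤ E.sup id := fun i hi => Finset.le_sup (f := id) hi
    set t0 := E.sup id with ht0_def
    have ht0T : t0 ∈ T := (Finset.mem_erase.mp ht0mem).2
    have ht0ne : t0 ≠ k - m := (Finset.mem_erase.mp ht0mem).1
    have ht0lt : t0 < k - m := lt_of_le_of_ne (hbd _ ht0T) ht0ne
    obtain ⟨i', hi'T, hi'1, hi'2⟩ := hgap t0 ht0T ht0lt
    have hi'eq : i' = k - m := by
      by_contra h
      have : i' ∈ E := Finset.mem_erase.mpr ⟨h, hi'T⟩
      have := hub i' this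
      omega
    refine ⟨Finset.mem_Icc.mpr ⟨by omega, by omega⟩, ht0mem, hub⟩
  rw [Finset.card_eq_sum_card_fiberwise (f := f) (t := Finset.Icc 1 (m - 1))
    (fun T hT => (hfacts T hT).1)]
  refine Finset.sum_congr rfl fun l hl => ?_
  obtain ⟨hl1, hl2⟩ := Finset.mem_Icc.mp hl
  refine Finset.card_bij' (fun T _ => T.erase (k - m)) (fun T' _ => insert (k - m) T')
    ?_ ?_ ?_ ?_
  · -- erase maps into markSets m (j+1) (k-l)
    intro T hT
    rw [Finset.mem_filter] at hT
    obtain ⟨hTA, hfT⟩ := hT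
    obtain ⟨hlIcc, ht0mem, hub⟩ := hfacts T hTA
    obtain ⟨⟨hmk, h0, hkm, hbd, hgap⟩, hcard⟩ := mem_markSets.mp hTA
    set E := T.erase (k - m) with hE_def
    set t0 := E.sup id with ht0_def
    have ht0T : t0 ∈ T := (Finset.mem_erase.mp ht0mem).2
    have ht0lt : t0 < k - m := lt_of_le_of_ne (hbd _ ht0T) (Finset.mem_erase.mp ht0mem).1
    have hlval : (k - m) - t0 = l := hfT
    have ht0eq : k - l - m = t0 := by omega
    refine mem_markSets.mpr ⟨⟨by omega, ?_, ?_, ?_, ?_⟩, ?_⟩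
    · exact Finset.mem_erase.mpr ⟨by omega, h0⟩
    · rw [ht0eq]; exact ht0mem
    · intro i hi; rw [ht0eq]; exact hub i hi
    · intro i hiE hilt
      rw [ht0eq] at hilt
      have hiT : i ∈ T := (Finset.mem_erase.mp hiE).2
      obtain ⟨i', hi'T, h1, h2⟩ := hgap i hiT (by omega)
      by_cases h : i' = k - m
      · exact ⟨t0, ht0mem, by omega, by omega⟩
      · exact ⟨i', Finset.mem_erase.mpr ⟨h, hi'T⟩, h1, h2⟩
    · rw [Finset.card_erase_of_mem hkm, hcard]; omega
  · -- insert maps into the fiber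
    intro T' hT'
    obtain ⟨⟨hmk', h0', hkm', hbd', hgap'⟩, hcard'⟩ := mem_markSets.mp hT'
    set t0 := k - l - m with ht0_def
    have hlk : l + m ≤ k := by omega
    have htlt : t0 < k - m := by omega
    have hnotmem : k - m ∉ T' := fun h => by have := hbd' _ h; omega
    rw [Finset.mem_filter]
    refine ⟨mem_markSets.mpr ⟨⟨by omega, ?_, ?_, ?_, ?_⟩, ?_⟩, ?_⟩
    · exact Finset.mem_insert_of_mem h0'
    · exact Finset.mem_insert_self _ _
    · intro i hi
      rcases Finset.mem_insert.mp hi with h | h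
      · omega
      · have := hbd' i h; omega
    · intro i hi hilt
      rcases Finset.mem_insert.mp hi with h | h
      · omega
      · have hile : i ≤ t0 := hbd' i h
        rcases eq_or_lt_of_le hile with h1 | h1
        · exact ⟨k - m, Finset.mem_insert_self _ _, by omega, by omega⟩
        · obtain ⟨i', hi'T', ha, hb⟩ := hgap' i h h1
          exact ⟨i', Finset.mem_insert_of_mem hi'T', ha, hb⟩
    · rw [Finset.card_insert_of_notMem hnotmem, hcard']
    · -- f value is l
      show (k - m) - ((insert (k - m) T').erase (k - m)).sup id = l
      rw [Finset.erase_insert hnotmem]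
      have hsup : T'.sup id = t0 := by
        refine le_antisymm (Finset.sup_le fun i hi => hbd' i hi) ?_
        exact Finset.le_sup (f := id) hkm'
      rw [hsup]
      omega
  · intro T hT
    rw [Finset.mem_filter] at hT
    obtain ⟨⟨hmk, h0, hkm, hbd, hgap⟩, hcard⟩ := mem_markSets.mp hT.1
    exact Finset.insert_erase hkm
  · intro T' hT'
    obtain ⟨⟨hmk', h0', hkm', hbd', hgap'⟩, hcard'⟩ := mem_markSets.mp hT'
    have hnotmem : k - m ∉ T' := fun h => by
      have := hbd' _ h; omega
    exact Finset.erase_insert hnotmem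

lemma count_identity {m : ℕ} (hm : 2 ≤ m) (a b : ℕ) :
    clusterCount m a b = (if a = 1 ∧ b = m then 1 else 0) +
      ∑ l ∈ Finset.Icc 1 (m - 1), if 1 ≤ a ∧ l ≤ b then clusterCount m (a - 1) (b - l) else 0 := by
  classical
  match a with
  | 0 =>
    rw [clusterCount_eq hm, markSets_zero]
    simp
  | 1 =>
    rw [clusterCount_eq hm, markSets_one hm]
    have : ∑ l ∈ Finset.Icc 1 (m - 1),
        (if 1 ≤ 1 ∧ l ≤ b then clusterCount m 0 (b - l) else 0) = 0 := by
      refine Finset.sum_eq_zero fun l _ => ?_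
      split_ifs with h
      · rw [clusterCount_eq hm, markSets_zero]
      · rfl
    rw [this, add_zero]
    simp
  | (n + 2) =>
    rw [clusterCount_eq hm, markSets_rec hm]
    have h1 : ¬(n + 2 = 1 ∧ b = m) := by omega
    rw [if_neg h1, zero_add]
    refine Finset.sum_congr rfl fun l hl => ?_
    obtain ⟨hl1, hl2⟩ := Finset.mem_Icc.mp hl
    by_cases h : l ≤ b
    · rw [if_pos ⟨by omega, h⟩, clusterCount_eq hm]
      simp
    · rw [if_neg (by omega)]
      have : b - l = 0 := by omega
      rw [this]
      exact markSets_small (by omega)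

open MvPowerSeries in
/-- For `m ≥ 2`, the generating function for `12⋯m`-clusters counted
by length (variable `x`) and number of marked occurrences (variable `s`),
`Σ_{k≥2} Σ_{π ∈ S_k} Σ_{c ∈ C_{12⋯m,π}} s^{mk(c)} x^k`, equals
`s x^m / (1 − s (x + x² + ⋯ + x^{m-1}))` as a formal power series in `s` and `x`.
Here the left-hand side is the power series whose coefficient of `s^j x^k` is the
number of `12⋯m`-clusters of length `k` with `j` marks (which vanishes for `k < 2`). -/
theorem cluster_gf_monotone (m : ℕ) (hm : 2 ≤ m) :
    (fun e => (clusterCount m (e 0) (e 1) : ℚ) : MvPowerSeries (Fin 2) ℚ) =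
      X 0 * X 1 ^ m *
        (1 - X 0 * ∑ l ∈ Finset.Icc 1 (m - 1), (X 1 : MvPowerSeries (Fin 2) ℚ) ^ l)⁻¹ := by
  classical
  set F : MvPowerSeries (Fin 2) ℚ :=
    (fun e => (clusterCount m (e 0) (e 1) : ℚ)) with hF
  set S : MvPowerSeries (Fin 2) ℚ := ∑ l ∈ Finset.Icc 1 (m - 1), (X 1) ^ l with hS
  have hXS : ∀ c : ℕ, (X 0 : MvPowerSeries (Fin 2) ℚ) * X 1 ^ c =
      monomial (Finsupp.single 0 1 + Finsupp.single 1 c) 1 := by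
    intro c
    rw [MvPowerSeries.X_pow_eq, MvPowerSeries.X_def, MvPowerSeries.monomial_mul_monomial, one_mul]
  have key : F * (1 - X 0 * S) = X 0 * X 1 ^ m := by
    have expand : F * (X 0 * S) = ∑ l ∈ Finset.Icc 1 (m - 1),
        F * monomial (Finsupp.single 0 1 + Finsupp.single 1 l) 1 := by
      rw [hS, Finset.mul_sum, Finset.mul_sum]
      exact Finset.sum_congr rfl fun l _ => by rw [← mul_assoc, mul_assoc F, hXS l]
    rw [mul_sub, mul_one, hXS m, expand, sub_eq_iff_eq_add]
    ext e
    rw [map_add, map_sum, MvPowerSeries.coeff_monomial]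
    simp only [MvPowerSeries.coeff_mul_monomial, mul_one]
    simp only [MvPowerSeries.coeff_apply]
    simp only [hF]
    rw [count_identity hm (e 0) (e 1)]
    push_cast [apply_ite (Nat.cast : ℕ → ℚ)]
    simp [Finsupp.le_def, Fin.forall_fin_two, Finsupp.ext_iff, Finsupp.single_apply,
      Pi.sub_apply]
  have hc1 : constantCoeff (1 - X 0 * S) = 1 := by
    simp [MvPowerSeries.constantCoeff_X]
  have hunit : (1 - X 0 * S) * (1 - X 0 * S)⁻¹ = 1 :=
    MvPowerSeries.mul_inv_cancel _ (by rw [hc1]; exact one_ne_zero)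
  calc F = F * ((1 - X 0 * S) * (1 - X 0 * S)⁻¹) := by rw [hunit, mul_one]
    _ = (F * (1 - X 0 * S)) * (1 - X 0 * S)⁻¹ := (mul_assoc _ _ _).symm
    _ = X 0 * X 1 ^ m * (1 - X 0 * S)⁻¹ := by rw [key]
end
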